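/- arXiv:2005.05793 — 14 statements merged into one kernel-verified Lean document; each statement's English description precedes it below -/
import Mathlib

section
/- Assume π ≠ τ. The evolution algebra E^n_{π,τ} is baric if and only if there exists k₀ : Fin n such that one of the following holds: (1) π k₀ = k₀, τ k₀ ≠ k₀, a k₀ k₀ ≠ 0 and a (τ⁻¹ k₀) k₀ = 0; (1') τ k₀ = k₀, π k₀ ≠ k₀, a k₀ k₀ ≠ 0 and a (π⁻¹ k₀) k₀ = 0; (2) π k₀ = k₀, τ k₀ = k₀ and a k₀ k₀ ≠ 0. Moreover, in cases (1) and (1') the functional σ(x) = a k₀ k₀ * x k₀ is a weight function, and in case (2) the functional σ(x) = 2 * a k₀ k₀ * x k₀ is a weight function. -/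
/-- The product of the evolution algebra `E_{π,τ}(a)` on a finite type `ι`. -/
noncomputable def evolMul {ι : Type*} [Fintype ι] [DecidableEq ι]
    (π τ : Equiv.Perm ι) (a : ι → ι → ℝ) (x y : ι → ℝ) : ι → ℝ :=
  fun j => ∑ i, x i * y i *
    ((if π i = j then a i (π i) else 0) + (if τ i = j then a i (τ i) else 0))

/-- A weight function (character) on `E^n_{π,τ}`: a nonzero linear functional that is
multiplicative with respect to the evolution algebra product. -/
def IsWeight {ι : Type*} [Fintype ι] [DecidableEq ι]
    (π τ : Equiv.Perm ι) (a : ι → ι → ℝ) (σ : (ι → ℝ) →ₗ[ℝ] ℝ) : Prop :=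
  σ ≠ 0 ∧ ∀ x y : ι → ℝ, σ (evolMul π τ a x y) = σ x * σ y

/-! A weight `σ` is determined by the numbers `σ (e i)`. Since `e i * e j = 0` for `i ≠ j`,
at most one of them is nonzero, so `σ = c • proj k` with `c ≠ 0`. For such a functional
multiplicativity says `(x * y) k = c * x k * y k`, while `(x * y) k` only involves the
coordinates at `π⁻¹ k` and `τ⁻¹ k`; testing on `e k` and on the other preimage of `k` yields
exactly the three cases. -/

section EvolutionAlgebra

variable {ι : Type*} [Fintype ι] [DecidableEq ι] {π τ : Equiv.Perm ι} {a : ι → ι → ℝ}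
  {c : ℝ} {k : ι}

theorem evolMul_comm_perm (π τ : Equiv.Perm ι) (a : ι → ι → ℝ) :
    evolMul π τ a = evolMul τ π a := by
  funext x y j
  exact Finset.sum_congr rfl fun i _ => by ring

theorem isWeight_comm_perm {σ : (ι → ℝ) →ₗ[ℝ] ℝ} :
    IsWeight π τ a σ ↔ IsWeight τ π a σ := by
  rw [IsWeight, IsWeight, evolMul_comm_perm]

theorem evolMul_apply (x y : ι → ℝ) (j : ι) :
    evolMul π τ a x y j =
      x (π⁻¹ j) * y (π⁻¹ j) * a (π⁻¹ j) j + x (τ⁻¹ j) * y (τ⁻¹ j) * a (τ⁻¹ j) j := by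
  simp only [evolMul, mul_add, Finset.sum_add_distrib, mul_ite, mul_zero,
    ← Equiv.eq_symm_apply, Finset.sum_ite_eq', Finset.mem_univ, if_true,
    Equiv.apply_symm_apply, Equiv.Perm.inv_def]

theorem evolMul_single_single_of_ne {i j : ι} (h : i ≠ j) :
    evolMul π τ a (Pi.single i 1) (Pi.single j 1) = 0 := by
  funext k
  simp only [evolMul_apply, Pi.zero_apply, Pi.single_apply]
  split_ifs <;> simp_all

theorem evolMul_single_self_apply (i j : ι) :
    evolMul π τ a (Pi.single i 1) (Pi.single i 1) j =
      (if π i = j then a i j else 0) + (if τ i = j then a i j else 0) := by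
  rw [evolMul, Fintype.sum_eq_single i fun m hm => by simp [Pi.single_eq_of_ne hm]]
  split_ifs <;> simp_all

theorem IsWeight.exists_eq_smul_proj {σ : (ι → ℝ) →ₗ[ℝ] ℝ} (hσ : IsWeight π τ a σ) :
    ∃ k, ∃ c : ℝ, c ≠ 0 ∧ σ = c • LinearMap.proj k := by
  obtain ⟨hσ0, hmul⟩ := hσ
  obtain ⟨k, hk⟩ : ∃ k, σ (Pi.single k 1) ≠ 0 := by
    by_contra! h
    exact hσ0 <| (Pi.basisFun ℝ ι).ext fun i => by simpa using h i
  have hvanish : ∀ i ≠ k, σ (Pi.single i 1) = 0 := fun i hi => by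
    have := hmul (Pi.single i 1) (Pi.single k 1)
    rw [evolMul_single_single_of_ne hi, map_zero, eq_comm, mul_eq_zero] at this
    exact this.resolve_right hk
  refine ⟨k, σ (Pi.single k 1), hk, (Pi.basisFun ℝ ι).ext fun i => ?_⟩
  rcases eq_or_ne i k with rfl | hi
  · simp
  · simp [hvanish i hi, hi]

theorem isWeight_smul_proj_iff (hc : c ≠ 0) :
    IsWeight π τ a (c • LinearMap.proj k) ↔
      ∀ x y, evolMul π τ a x y k = c * (x k * y k) := by
  have hne : c • LinearMap.proj k ≠ (0 : (ι → ℝ) →ₗ[ℝ] ℝ) := fun h => by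
    simpa [hc] using LinearMap.congr_fun h (Pi.single k 1)
  simp only [IsWeight, hne, ne_eq, not_false_eq_true, true_and, LinearMap.smul_apply,
    LinearMap.coe_proj, Function.eval, smul_eq_mul]
  refine forall₂_congr fun x y => ?_
  rw [show c * x k * (c * y k) = c * (c * (x k * y k)) by ring, mul_right_inj' hc]

theorem isWeight_smul_proj_of_fixed (hπ : π k = k) (hk : a k k ≠ 0)
    (ha : a (τ⁻¹ k) k = 0) : IsWeight π τ a (a k k • LinearMap.proj k) := by
  rw [isWeight_smul_proj_iff hk]
  intro x y
  rw [evolMul_apply, Equiv.Perm.inv_eq_iff_eq.mpr hπ.symm, ha]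
  ring

theorem isWeight_two_mul_smul_proj_of_fixed (hπ : π k = k) (hτ : τ k = k)
    (hk : a k k ≠ 0) : IsWeight π τ a ((2 * a k k) • LinearMap.proj k) := by
  rw [isWeight_smul_proj_iff (mul_ne_zero two_ne_zero hk)]
  intro x y
  rw [evolMul_apply, Equiv.Perm.inv_eq_iff_eq.mpr hπ.symm, Equiv.Perm.inv_eq_iff_eq.mpr hτ.symm]
  ring

theorem IsWeight.diag_of_smul_proj (hc : c ≠ 0) (h : IsWeight π τ a (c • LinearMap.proj k)) :
    (if π k = k then a k k else 0) + (if τ k = k then a k k else 0) = c := by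
  simpa [evolMul_single_self_apply] using
    (isWeight_smul_proj_iff hc).mp h (Pi.single k 1) (Pi.single k 1)

theorem IsWeight.apply_inv_eq_zero_of_smul_proj (hc : c ≠ 0)
    (h : IsWeight π τ a (c • LinearMap.proj k))
    (hπ : π k = k) (hτ : τ k ≠ k) : a (τ⁻¹ k) k = 0 := by
  set i := τ⁻¹ k
  have hi : i ≠ k := fun h => hτ (Equiv.Perm.inv_eq_iff_eq.mp h).symm
  have hπi : π i ≠ k := fun h => hi (π.injective (h.trans hπ.symm))
  have hτi : τ i = k := τ.apply_symm_apply k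
  have := (isWeight_smul_proj_iff hc).mp h (Pi.single i 1) (Pi.single i 1)
  rwa [evolMul_single_self_apply, if_neg hπi, if_pos hτi, zero_add,
    Pi.single_eq_of_ne hi.symm, mul_zero, mul_zero] at this

theorem IsWeight.cases_of_smul_proj (hc : c ≠ 0) (h : IsWeight π τ a (c • LinearMap.proj k)) :
    (π k = k ∧ τ k ≠ k ∧ a k k ≠ 0 ∧ a (τ⁻¹ k) k = 0) ∨
      (τ k = k ∧ π k ≠ k ∧ a k k ≠ 0 ∧ a (π⁻¹ k) k = 0) ∨
      (π k = k ∧ τ k = k ∧ a k k ≠ 0) := by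
  have hdiag := h.diag_of_smul_proj hc
  by_cases hπ : π k = k <;> by_cases hτ : τ k = k <;>
    simp only [hπ, hτ, if_true, if_false, add_zero, zero_add] at hdiag
  · exact .inr <| .inr ⟨hπ, hτ, fun h0 => hc (by linarith)⟩
  · exact .inl ⟨hπ, hτ, hdiag ▸ hc, h.apply_inv_eq_zero_of_smul_proj hc hπ hτ⟩
  · exact .inr <| .inl ⟨hτ, hπ, hdiag ▸ hc,
      (isWeight_comm_perm.mp h).apply_inv_eq_zero_of_smul_proj hc hτ hπ⟩
  · exact absurd hdiag.symm hc

end EvolutionAlgebra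

theorem stmt_0_general (n : ℕ) (π τ : Equiv.Perm (Fin n))
    (a : Fin n → Fin n → ℝ) :
    ((∃ σ : (Fin n → ℝ) →ₗ[ℝ] ℝ, IsWeight π τ a σ) ↔
      ∃ k₀ : Fin n,
        (π k₀ = k₀ ∧ τ k₀ ≠ k₀ ∧ a k₀ k₀ ≠ 0 ∧ a (τ⁻¹ k₀) k₀ = 0) ∨
        (τ k₀ = k₀ ∧ π k₀ ≠ k₀ ∧ a k₀ k₀ ≠ 0 ∧ a (π⁻¹ k₀) k₀ = 0) ∨
        (π k₀ = k₀ ∧ τ k₀ = k₀ ∧ a k₀ k₀ ≠ 0)) ∧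
    (∀ k₀ : Fin n,
      ((π k₀ = k₀ ∧ τ k₀ ≠ k₀ ∧ a k₀ k₀ ≠ 0 ∧ a (τ⁻¹ k₀) k₀ = 0) ∨
       (τ k₀ = k₀ ∧ π k₀ ≠ k₀ ∧ a k₀ k₀ ≠ 0 ∧ a (π⁻¹ k₀) k₀ = 0) →
        ∀ σ : (Fin n → ℝ) →ₗ[ℝ] ℝ, (∀ x, σ x = a k₀ k₀ * x k₀) → IsWeight π τ a σ) ∧
      ((π k₀ = k₀ ∧ τ k₀ = k₀ ∧ a k₀ k₀ ≠ 0) →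
        ∀ σ : (Fin n → ℝ) →ₗ[ℝ] ℝ, (∀ x, σ x = 2 * a k₀ k₀ * x k₀) →
          IsWeight π τ a σ)) := by
  have weight_of_fixed_one : ∀ k,
      (π k = k ∧ τ k ≠ k ∧ a k k ≠ 0 ∧ a (τ⁻¹ k) k = 0) ∨
        (τ k = k ∧ π k ≠ k ∧ a k k ≠ 0 ∧ a (π⁻¹ k) k = 0) →
        IsWeight π τ a (a k k • LinearMap.proj k) := by
    rintro k (⟨hπ, -, hk, ha⟩ | ⟨hτ, -, hk, ha⟩)
    · exact isWeight_smul_proj_of_fixed hπ hk ha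
    · exact isWeight_comm_perm.mp (isWeight_smul_proj_of_fixed hτ hk ha)
  refine ⟨⟨?_, ?_⟩, fun k => ⟨?_, ?_⟩⟩
  · rintro ⟨σ, hσ⟩
    obtain ⟨k, c, hc, rfl⟩ := hσ.exists_eq_smul_proj
    exact ⟨k, hσ.cases_of_smul_proj hc⟩
  · rintro ⟨k, hk | hk | ⟨hπ, hτ, hk⟩⟩
    · exact ⟨_, weight_of_fixed_one k (.inl hk)⟩
    · exact ⟨_, weight_of_fixed_one k (.inr hk)⟩
    · exact ⟨_, isWeight_two_mul_smul_proj_of_fixed hπ hτ hk⟩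
  · rintro hk σ hσ
    obtain rfl : σ = a k k • LinearMap.proj k := LinearMap.ext hσ
    exact weight_of_fixed_one k hk
  · rintro ⟨hπ, hτ, hk⟩ σ hσ
    obtain rfl : σ = (2 * a k k) • LinearMap.proj k := LinearMap.ext hσ
    exact isWeight_two_mul_smul_proj_of_fixed hπ hτ hk

/-- the evolution algebra `E^n_{π,τ}` (with `π ≠ τ`) is baric if and only
if there is `k₀` satisfying condition (1), (1') or (2); moreover in cases (1), (1') the
functional `σ x = a k₀ k₀ * x k₀` is a weight function, and in case (2) the functional
`σ x = 2 * a k₀ k₀ * x k₀` is a weight function. -/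
theorem stmt_0 (n : ℕ) (π τ : Equiv.Perm (Fin n)) (hπτ : π ≠ τ)
    (a : Fin n → Fin n → ℝ) :
    ((∃ σ : (Fin n → ℝ) →ₗ[ℝ] ℝ, IsWeight π τ a σ) ↔
      ∃ k₀ : Fin n,
        (π k₀ = k₀ ∧ τ k₀ ≠ k₀ ∧ a k₀ k₀ ≠ 0 ∧ a (τ⁻¹ k₀) k₀ = 0) ∨
        (τ k₀ = k₀ ∧ π k₀ ≠ k₀ ∧ a k₀ k₀ ≠ 0 ∧ a (π⁻¹ k₀) k₀ = 0) ∨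
        (π k₀ = k₀ ∧ τ k₀ = k₀ ∧ a k₀ k₀ ≠ 0)) ∧
    (∀ k₀ : Fin n,
      ((π k₀ = k₀ ∧ τ k₀ ≠ k₀ ∧ a k₀ k₀ ≠ 0 ∧ a (τ⁻¹ k₀) k₀ = 0) ∨
       (τ k₀ = k₀ ∧ π k₀ ≠ k₀ ∧ a k₀ k₀ ≠ 0 ∧ a (π⁻¹ k₀) k₀ = 0) →
        ∀ σ : (Fin n → ℝ) →ₗ[ℝ] ℝ, (∀ x, σ x = a k₀ k₀ * x k₀) → IsWeight π τ a σ) ∧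
      ((π k₀ = k₀ ∧ τ k₀ = k₀ ∧ a k₀ k₀ ≠ 0) →
        ∀ σ : (Fin n → ℝ) →ₗ[ℝ] ℝ, (∀ x, σ x = 2 * a k₀ k₀ * x k₀) →
          IsWeight π τ a σ)) :=
  stmt_0_general n π τ a
end

section
/- Assume π ≠ τ. Let F be the set of all k : Fin n satisfying one of: (1) π k = k, τ k ≠ k, a k k ≠ 0 and a (τ⁻¹ k) k = 0; (1') τ k = k, π k ≠ k, a k k ≠ 0 and a (π⁻¹ k) k = 0; (2) π k = k, τ k = k and a k k ≠ 0. Then a linear functional σ on E^n_{π,τ} is a weight function if and only if there exists k ∈ F such that σ(x) = a k k * x k for all x (when exactly one of π, τ fixes k) or σ(x) = 2 * a k k * x k for all x (when both π and τ fix k). In particular, if F has exactly m elements, then E^n_{π,τ} has exactly m weight functions. -/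
/-!
A character `σ` sees `e_i * e_j = 0` for `i ≠ j`, so `σ e_i * σ e_j = 0`: at most one `σ e_k` is
nonzero, and `σ = c • proj k` with `c ≠ 0`. Multiplicativity on `e_i * e_i` then says exactly that
column `k` of the structure matrix is `c • e_k`. In `E_{π,τ}(a)` column `k` is supported on
`π⁻¹ k` and `τ⁻¹ k`, with diagonal entry `a k k` counted once for each of `π`, `τ` fixing `k`;
this is where the conditions defining `F` and the values `a k k`, `2 * a k k` come from.
-/

namespace EvolutionAlgebra

variable {ι : Type*}

def charIndices (M : ι → ι → ℝ) : Set ι :=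
  {k | M k k ≠ 0 ∧ ∀ i, i ≠ k → M i k = 0}

section Character

variable [Fintype ι]

/-- The evolution algebra with structure matrix `M`: `e_i * e_i = ∑ j, M i j • e_j` and
`e_i * e_j = 0` for `i ≠ j`. -/
def mul (M : ι → ι → ℝ) (x y : ι → ℝ) : ι → ℝ :=
  fun j => ∑ i, x i * y i * M i j

def IsCharacter (M : ι → ι → ℝ) (σ : (ι → ℝ) →ₗ[ℝ] ℝ) : Prop :=
  σ ≠ 0 ∧ ∀ x y, σ (mul M x y) = σ x * σ y

variable [DecidableEq ι] {M : ι → ι → ℝ}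

theorem mul_single_single_of_ne {i j : ι} (h : i ≠ j) :
    mul M (Pi.single i 1) (Pi.single j 1) = 0 := by
  funext l
  refine Finset.sum_eq_zero fun m _ => ?_
  rcases eq_or_ne m i with rfl | hm
  · simp [Pi.single_eq_of_ne h]
  · simp [Pi.single_eq_of_ne hm]

theorem mul_single_self (i : ι) : mul M (Pi.single i 1) (Pi.single i 1) = M i := by
  funext j
  simp [mul, Pi.single_apply]

theorem exists_eq_smul_proj_of_isCharacter {σ : (ι → ℝ) →ₗ[ℝ] ℝ} (hσ : IsCharacter M σ) :
    ∃ k, ∃ c : ℝ, c ≠ 0 ∧ σ = c • LinearMap.proj k := by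
  obtain ⟨hne, hmul⟩ := hσ
  obtain ⟨k, hk⟩ : ∃ k, σ (Pi.single k 1) ≠ 0 := by
    by_contra! h
    exact hne ((Pi.basisFun ℝ ι).ext fun i => by simp [h])
  refine ⟨k, σ (Pi.single k 1), hk, (Pi.basisFun ℝ ι).ext fun i => ?_⟩
  rcases eq_or_ne i k with rfl | hik
  · simp
  · have hprod := hmul (Pi.single i 1) (Pi.single k 1)
    rw [mul_single_single_of_ne hik, map_zero, eq_comm, mul_eq_zero, or_iff_left hk] at hprod
    simp [hprod, Pi.single_eq_of_ne' hik]

theorem isCharacter_smul_proj_iff {c : ℝ} (hc : c ≠ 0) (k : ι) :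
    IsCharacter M (c • LinearMap.proj k) ↔ ∀ i, M i k = if i = k then c else 0 := by
  have hne : c • LinearMap.proj (R := ℝ) (φ := fun _ : ι => ℝ) k ≠ 0 := fun h => by
    simpa [hc] using LinearMap.congr_fun h (Pi.single k 1)
  simp only [IsCharacter, hne, ne_eq, not_false_eq_true, true_and, LinearMap.smul_apply,
    LinearMap.proj_apply, smul_eq_mul]
  constructor
  · intro h i
    have := h (Pi.single i 1) (Pi.single i 1)
    rw [mul_single_self] at this
    split_ifs with hik
    · subst hik; simpa [hc] using this
    · simpa [hc, Pi.single_eq_of_ne' hik] using this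
  · intro h x y
    simp only [mul, h, mul_ite, mul_zero, Finset.sum_ite_eq', Finset.mem_univ, if_true]
    ring

theorem isCharacter_iff {σ : (ι → ℝ) →ₗ[ℝ] ℝ} :
    IsCharacter M σ ↔ ∃ k ∈ charIndices M, σ = M k k • LinearMap.proj k := by
  constructor
  · intro hσ
    obtain ⟨k, c, hc, rfl⟩ := exists_eq_smul_proj_of_isCharacter hσ
    have hcol := (isCharacter_smul_proj_iff hc k).1 hσ
    have hkk : M k k = c := by simpa using hcol k
    exact ⟨k, ⟨hkk ▸ hc, fun i hi => by simpa [hi] using hcol i⟩, by rw [hkk]⟩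
  · rintro ⟨k, ⟨hk, hcol⟩, rfl⟩
    refine (isCharacter_smul_proj_iff hk k).2 fun i => ?_
    split_ifs with hik
    · rw [hik]
    · exact hcol i hik

theorem ncard_setOf_isCharacter : {σ | IsCharacter M σ}.ncard = (charIndices M).ncard := by
  have himage : {σ | IsCharacter M σ} = (fun k => M k k • LinearMap.proj k) '' charIndices M := by
    ext σ
    simp [isCharacter_iff, eq_comm]
  rw [himage, Set.InjOn.ncard_image]
  intro k hk l _ hkl
  by_contra hne
  simpa [Pi.single_eq_of_ne' hne, hk.1] using LinearMap.congr_fun hkl (Pi.single k 1)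

end Character

section Permutations

variable [DecidableEq ι] (π τ : Equiv.Perm ι) (a : ι → ι → ℝ)

/-- The structure matrix of `E_{π,τ}(a)`: `e_i * e_i = ∑ j, evolCoeff π τ a i j • e_j`. -/
def evolCoeff (i j : ι) : ℝ :=
  (if π i = j then a i (π i) else 0) + (if τ i = j then a i (τ i) else 0)

variable {π τ a}

theorem evolCoeff_comm : evolCoeff π τ a = evolCoeff τ π a := by
  funext i j
  exact add_comm _ _

theorem evolCoeff_self (k : ι) :
    evolCoeff π τ a k k = (if π k = k then a k k else 0) + (if τ k = k then a k k else 0) := by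
  by_cases hπ : π k = k <;> by_cases hτ : τ k = k <;> simp [evolCoeff, hπ, hτ]

theorem mem_charIndices_evolCoeff_of_fixed_of_fixed {k : ι} (hπ : π k = k) (hτ : τ k = k) :
    k ∈ charIndices (evolCoeff π τ a) ↔ a k k ≠ 0 := by
  have hcol : ∀ i, i ≠ k → evolCoeff π τ a i k = 0 := fun i hi => by
    simp [evolCoeff, hπ ▸ π.injective.ne hi, hτ ▸ τ.injective.ne hi]
  rw [charIndices, Set.mem_ofPred_eq, and_iff_left hcol, evolCoeff_self]
  simp [hπ, hτ]

theorem mem_charIndices_evolCoeff_of_fixed_of_not_fixed {k : ι} (hπ : π k = k) (hτ : τ k ≠ k) :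
    k ∈ charIndices (evolCoeff π τ a) ↔ a k k ≠ 0 ∧ a (τ⁻¹ k) k = 0 := by
  have hcol : ∀ i, i ≠ k → evolCoeff π τ a i k = if i = τ⁻¹ k then a i k else 0 := fun i hi => by
    have : π i ≠ k := hπ ▸ π.injective.ne hi
    simp only [evolCoeff, this, if_false, zero_add, Equiv.Perm.eq_inv_iff_eq]
    split_ifs with h <;> simp [h]
  have hτk : τ⁻¹ k ≠ k := by rwa [Ne, Equiv.Perm.inv_eq_iff_eq, eq_comm]
  refine and_congr (by simp [evolCoeff_self, hπ, hτ]) ⟨fun h => ?_, fun h i hi => ?_⟩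
  · have := h _ hτk
    rwa [hcol _ hτk, if_pos rfl] at this
  · rw [hcol i hi]
    split_ifs with hi'
    · rw [hi', h]
    · rfl

theorem notMem_charIndices_evolCoeff {k : ι} (hπ : π k ≠ k) (hτ : τ k ≠ k) :
    k ∉ charIndices (evolCoeff π τ a) := fun hk => hk.1 (by simp [evolCoeff_self, hπ, hτ])

theorem mem_charIndices_evolCoeff_iff {k : ι} :
    k ∈ charIndices (evolCoeff π τ a) ↔
      (π k = k ∧ τ k ≠ k ∧ a k k ≠ 0 ∧ a (τ⁻¹ k) k = 0) ∨
      (τ k = k ∧ π k ≠ k ∧ a k k ≠ 0 ∧ a (π⁻¹ k) k = 0) ∨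
      (π k = k ∧ τ k = k ∧ a k k ≠ 0) := by
  by_cases hπ : π k = k <;> by_cases hτ : τ k = k
  · simp [mem_charIndices_evolCoeff_of_fixed_of_fixed hπ hτ, hπ, hτ]
  · simp [mem_charIndices_evolCoeff_of_fixed_of_not_fixed hπ hτ, hπ, hτ]
  · rw [evolCoeff_comm]
    simp [mem_charIndices_evolCoeff_of_fixed_of_not_fixed hτ hπ, hπ, hτ]
  · simp [notMem_charIndices_evolCoeff hπ hτ, hπ, hτ]

theorem eq_evolCoeff_smul_proj_iff {σ : (ι → ℝ) →ₗ[ℝ] ℝ} {k : ι} (hk : π k = k ∨ τ k = k) :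
    σ = evolCoeff π τ a k k • LinearMap.proj k ↔
      (((π k = k ∧ τ k ≠ k) ∨ (τ k = k ∧ π k ≠ k)) ∧ ∀ x, σ x = a k k * x k) ∨
      ((π k = k ∧ τ k = k) ∧ ∀ x, σ x = 2 * a k k * x k) := by
  rw [LinearMap.ext_iff, evolCoeff_self]
  by_cases hπ : π k = k <;> by_cases hτ : τ k = k <;> simp_all [two_mul]

theorem isWeight_iff_isCharacter [Fintype ι] {σ : (ι → ℝ) →ₗ[ℝ] ℝ} :
    IsWeight π τ a σ ↔ IsCharacter (evolCoeff π τ a) σ :=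
  Iff.rfl

end Permutations

end EvolutionAlgebra

theorem stmt_1_general (n : ℕ) (π τ : Equiv.Perm (Fin n))
    (a : Fin n → Fin n → ℝ) (F : Set (Fin n))
    (hF : F = {k : Fin n |
        (π k = k ∧ τ k ≠ k ∧ a k k ≠ 0 ∧ a (τ⁻¹ k) k = 0) ∨
        (τ k = k ∧ π k ≠ k ∧ a k k ≠ 0 ∧ a (π⁻¹ k) k = 0) ∨
        (π k = k ∧ τ k = k ∧ a k k ≠ 0)}) :
    (∀ σ : (Fin n → ℝ) →ₗ[ℝ] ℝ,
      IsWeight π τ a σ ↔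
        ∃ k ∈ F,
          (((π k = k ∧ τ k ≠ k) ∨ (τ k = k ∧ π k ≠ k)) ∧
              ∀ x, σ x = a k k * x k) ∨
          ((π k = k ∧ τ k = k) ∧ ∀ x, σ x = 2 * a k k * x k)) ∧
    (∀ m : ℕ, F.ncard = m →
      {σ : (Fin n → ℝ) →ₗ[ℝ] ℝ | IsWeight π τ a σ}.ncard = m) := by
  have hF' : F = EvolutionAlgebra.charIndices (EvolutionAlgebra.evolCoeff π τ a) :=
    hF ▸ Set.ext fun k => EvolutionAlgebra.mem_charIndices_evolCoeff_iff.symm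
  subst hF'
  refine ⟨fun σ => ?_, fun m hm => hm ▸ EvolutionAlgebra.ncard_setOf_isCharacter⟩
  rw [EvolutionAlgebra.isWeight_iff_isCharacter, EvolutionAlgebra.isCharacter_iff]
  refine exists_congr fun k => and_congr_right fun hk =>
    EvolutionAlgebra.eq_evolCoeff_smul_proj_iff ?_
  by_contra! h
  exact EvolutionAlgebra.notMem_charIndices_evolCoeff h.1 h.2 hk

/-- characterization of all weight functions of `E^n_{π,τ}` (with `π ≠ τ`)
via the set `F` of indices satisfying conditions (1), (1'), (2); in particular if `F`
has exactly `m` elements, then `E^n_{π,τ}` has exactly `m` weight functions. -/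
theorem stmt_1 (n : ℕ) (π τ : Equiv.Perm (Fin n)) (hπτ : π ≠ τ)
    (a : Fin n → Fin n → ℝ) (F : Set (Fin n))
    (hF : F = {k : Fin n |
        (π k = k ∧ τ k ≠ k ∧ a k k ≠ 0 ∧ a (τ⁻¹ k) k = 0) ∨
        (τ k = k ∧ π k ≠ k ∧ a k k ≠ 0 ∧ a (π⁻¹ k) k = 0) ∨
        (π k = k ∧ τ k = k ∧ a k k ≠ 0)}) :
    (∀ σ : (Fin n → ℝ) →ₗ[ℝ] ℝ,
      IsWeight π τ a σ ↔
        ∃ k ∈ F,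
          (((π k = k ∧ τ k ≠ k) ∨ (τ k = k ∧ π k ≠ k)) ∧
              ∀ x, σ x = a k k * x k) ∨
          ((π k = k ∧ τ k = k) ∧ ∀ x, σ x = 2 * a k k * x k)) ∧
    (∀ m : ℕ, F.ncard = m →
      {σ : (Fin n → ℝ) →ₗ[ℝ] ℝ | IsWeight π τ a σ}.ncard = m) :=
  stmt_1_general n π τ a F hF
end

section
/- Let r ≥ 1 and let c, d : Fin r → ℝ. The system of equations (x i)^2 = −(c i * u^2 + d i * v^2) for all i : Fin r, in the unknowns x : Fin r → ℝ and u, v : ℝ, has only the trivial solution x = 0, u = 0, v = 0 if and only if one of the following conditions holds: (i) there exists i₀ with c i₀ > 0 and d i₀ > 0; (ii) there exist k, m such that (c k > 0, d k = 0 and d m > 0) or (c k = 0, d k > 0 and c m > 0); (iii) there exist s, t such that c s > 0, d s < 0, c t < 0, d t > 0 and (−(d t))/(c t) > (−(d s))/(c s). -/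
lemma helper {r : ℕ} (c d : Fin r → ℝ) (a b : ℝ) (ha : 0 ≤ a) (hb : 0 ≤ b)
    (hab : a ≠ 0 ∨ b ≠ 0) (h : ∀ i, c i * a + d i * b ≤ 0) :
    ¬ (∀ (x : Fin r → ℝ) (u v : ℝ),
        (∀ i, (x i) ^ 2 = -(c i * u ^ 2 + d i * v ^ 2)) → x = 0 ∧ u = 0 ∧ v = 0) := by
  intro H
  obtain ⟨hx, hu, hv⟩ := H (fun i => Real.sqrt (-(c i * a + d i * b)))
    (Real.sqrt a) (Real.sqrt b) (by
      intro i
      rw [Real.sq_sqrt ha, Real.sq_sqrt hb, Real.sq_sqrt (by linarith [h i])])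
  rcases hab with h' | h'
  · exact h' ((Real.sqrt_eq_zero ha).mp hu)
  · exact h' ((Real.sqrt_eq_zero hb).mp hv)

/-- the system `(x i)^2 = −(c i * u^2 + d i * v^2)` (for `i : Fin r`,
`r ≥ 1`) has only the trivial solution iff one of conditions (i), (ii), (iii) holds. -/
theorem stmt_2 (r : ℕ) (hr : 1 ≤ r) (c d : Fin r → ℝ) :
    (∀ (x : Fin r → ℝ) (u v : ℝ),
        (∀ i, (x i) ^ 2 = -(c i * u ^ 2 + d i * v ^ 2)) → x = 0 ∧ u = 0 ∧ v = 0) ↔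
      ((∃ i₀ : Fin r, 0 < c i₀ ∧ 0 < d i₀) ∨
       (∃ k m : Fin r,
          (0 < c k ∧ d k = 0 ∧ 0 < d m) ∨ (c k = 0 ∧ 0 < d k ∧ 0 < c m)) ∨
       (∃ s t : Fin r, 0 < c s ∧ d s < 0 ∧ c t < 0 ∧ 0 < d t ∧
          (-(d t)) / (c t) > (-(d s)) / (c s))) := by
  constructor
  · intro H
    by_contra hcon
    push_neg at hcon
    obtain ⟨h1, h2, h3⟩ := hcon
    by_cases hC : ∀ i, c i ≤ 0
    · exact helper c d 1 0 zero_le_one le_rfl (Or.inl one_ne_zero)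
        (fun i => by simpa using hC i) H
    by_cases hD : ∀ i, d i ≤ 0
    · exact helper c d 0 1 le_rfl zero_le_one (Or.inr one_ne_zero)
        (fun i => by simpa using hD i) H
    push_neg at hC hD
    obtain ⟨s₀, hs₀⟩ := hC
    obtain ⟨t₀, ht₀⟩ := hD
    -- every i with 0 < d i has c i < 0
    have hT : ∀ i, 0 < d i → c i < 0 := by
      intro i hi
      rcases lt_trichotomy (c i) 0 with h | h | h
      · exact h
      · exact absurd hs₀ (not_lt.mpr ((h2 i s₀).2 h hi))
      · exact absurd hi (not_lt.mpr (h1 i h))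
    -- every i with 0 < c i has d i < 0
    have hS : ∀ i, 0 < c i → d i < 0 := by
      intro i hi
      rcases lt_trichotomy (d i) 0 with h | h | h
      · exact h
      · exact absurd ht₀ (not_lt.mpr ((h2 i t₀).1 hi h))
      · exact absurd h (not_lt.mpr (h1 i hi))
    -- take a = max over T of -(d i)/(c i)
    have hT' : (Finset.univ.filter (fun i => 0 < d i)).Nonempty :=
      ⟨t₀, by simp [ht₀]⟩
    obtain ⟨t₁, ht₁mem, ht₁⟩ := Finset.exists_mem_eq_sup' hT' (fun i => -(d i) / (c i))
    set a := (Finset.univ.filter (fun i => 0 < d i)).sup' hT' (fun i => -(d i) / (c i)) with hadef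
    have ht₁d : 0 < d t₁ := by
      simpa using (Finset.mem_filter.mp ht₁mem).2
    have ht₁c : c t₁ < 0 := hT t₁ ht₁d
    have hapos : 0 < a := by
      rw [ht₁]
      exact div_pos_of_neg_of_neg (by linarith) ht₁c
    refine helper c d a 1 hapos.le zero_le_one (Or.inr one_ne_zero) ?_ H
    intro i
    rw [mul_one]
    by_cases hdi : 0 < d i
    · have hci : c i < 0 := hT i hdi
      have hle : -(d i) / (c i) ≤ a := by
        rw [hadef]
        exact Finset.le_sup' (fun j => -(d j) / (c j))
          (Finset.mem_filter.mpr ⟨Finset.mem_univ i, hdi⟩)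
      have : c i * a ≤ c i * (-(d i) / (c i)) :=
        mul_le_mul_of_nonpos_left hle hci.le
      rw [mul_div_cancel₀ _ hci.ne] at this
      linarith
    · by_cases hci : 0 < c i
      · have hdi' : d i < 0 := hS i hci
        have hle : a ≤ -(d i) / (c i) := by
          rw [ht₁]
          exact h3 i t₁ hci hdi' ht₁c ht₁d
        have : c i * a ≤ c i * (-(d i) / (c i)) :=
          mul_le_mul_of_nonneg_left hle hci.le
        rw [mul_div_cancel₀ _ hci.ne'] at this
        linarith
      · push_neg at hdi hci
        nlinarith
  · intro h x u v hx
    have key : u = 0 ∧ v = 0 := by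
      rcases h with ⟨i₀, hc, hd⟩ | ⟨k, m, ⟨hc, hd, hm⟩ | ⟨hc, hd, hm⟩⟩ | ⟨s, t, hcs, hds, hct, hdt, hlt⟩
      · have h0 := hx i₀
        have hu2 : u ^ 2 = 0 := by
          nlinarith [sq_nonneg u, sq_nonneg v, sq_nonneg (x i₀)]
        have hv2 : v ^ 2 = 0 := by
          nlinarith [sq_nonneg u, sq_nonneg v, sq_nonneg (x i₀)]
        exact ⟨pow_eq_zero_iff two_ne_zero |>.mp hu2, pow_eq_zero_iff two_ne_zero |>.mp hv2⟩
      · have h0 := hx k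
        have h0' := hx m
        have hu2 : u ^ 2 = 0 := by
          nlinarith [sq_nonneg u, sq_nonneg (x k)]
        have hv2 : v ^ 2 = 0 := by
          nlinarith [sq_nonneg v, sq_nonneg (x m), mul_eq_zero_of_right (c m) hu2]
        exact ⟨pow_eq_zero_iff two_ne_zero |>.mp hu2, pow_eq_zero_iff two_ne_zero |>.mp hv2⟩
      · have h0 := hx k
        have h0' := hx m
        have hv2 : v ^ 2 = 0 := by
          nlinarith [sq_nonneg v, sq_nonneg (x k)]
        have hu2 : u ^ 2 = 0 := by
          nlinarith [sq_nonneg u, sq_nonneg (x m), mul_eq_zero_of_right (d m) hv2]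
        exact ⟨pow_eq_zero_iff two_ne_zero |>.mp hu2, pow_eq_zero_iff two_ne_zero |>.mp hv2⟩
      · have h0 := hx s
        have h0' := hx t
        -- cross-multiplied: d s * c t < d t * c s
        have hkey : d s * c t < d t * c s := by
          have e1 : -(d s) / (c s) * c s = -(d s) := div_mul_cancel₀ _ hcs.ne'
          have e2 : -(d t) / (c t) * c t = -(d t) := div_mul_cancel₀ _ hct.ne
          nlinarith [mul_pos hcs (neg_pos.mpr hct), hlt]
        have hu2 : u ^ 2 = 0 := by
          nlinarith [sq_nonneg u, sq_nonneg v, sq_nonneg (x s), sq_nonneg (x t)]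
        have hv2 : v ^ 2 = 0 := by
          nlinarith [sq_nonneg u, sq_nonneg v, sq_nonneg (x s), sq_nonneg (x t)]
        exact ⟨pow_eq_zero_iff two_ne_zero |>.mp hu2, pow_eq_zero_iff two_ne_zero |>.mp hv2⟩
    obtain ⟨hu, hv⟩ := key
    refine ⟨funext fun i => ?_, hu, hv⟩
    have := hx i
    rw [hu, hv] at this
    simp only [Pi.zero_apply]
    have : (x i) ^ 2 = 0 := by simpa using this
    exact pow_eq_zero_iff two_ne_zero |>.mp this
end

section
/- Let M : Matrix (Fin n) (Fin n) ℝ be defined by M i j = (if π i = j then a i j else 0) + (if τ i = j then a i j else 0) (the matrix of structural constants of E^n_{π,τ}). If det M ≠ 0, then the only absolute nilpotent element of E^n_{π,τ} is x = 0. -/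
section EvolutionAlgebra

variable {ι : Type*} [Fintype ι] [DecidableEq ι] (π τ : Equiv.Perm ι) (a : ι → ι → ℝ)

def evolStructMatrix : Matrix ι ι ℝ :=
  fun i j => (if π i = j then a i j else 0) + (if τ i = j then a i j else 0)

theorem evolMul_eq_vecMul (x y : ι → ℝ) :
    evolMul π τ a x y = Matrix.vecMul (x * y) (evolStructMatrix π τ a) := by
  funext j
  refine Finset.sum_congr rfl fun i _ => ?_
  simp only [evolStructMatrix, Pi.mul_apply]
  congr 2 <;> split_ifs with h <;> simp [h]

theorem eq_zero_of_evolMul_self_eq_zero (hdet : (evolStructMatrix π τ a).det ≠ 0)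
    {x : ι → ℝ} (hx : evolMul π τ a x x = 0) : x = 0 := by
  rw [evolMul_eq_vecMul] at hx
  have hsq : x * x = 0 := Matrix.eq_zero_of_vecMul_eq_zero hdet hx
  exact funext fun i => mul_self_eq_zero.mp (congrFun hsq i)

end EvolutionAlgebra

/-- if the matrix of structural constants of `E^n_{π,τ}` has nonzero
determinant, then the only absolute nilpotent element is `x = 0`. -/
theorem stmt_3 (n : ℕ) (π τ : Equiv.Perm (Fin n)) (a : Fin n → Fin n → ℝ)
    (M : Matrix (Fin n) (Fin n) ℝ)
    (hM : ∀ i j, M i j = (if π i = j then a i j else 0) + (if τ i = j then a i j else 0))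
    (hdet : M.det ≠ 0) :
    ∀ x : Fin n → ℝ, evolMul π τ a x x = 0 → x = 0 := by
  have hM : M = evolStructMatrix π τ a := Matrix.ext hM
  subst hM
  exact fun x => eq_zero_of_evolMul_self_eq_zero π τ a hdet
end

section
/- Let n ≥ 2 and let M : Matrix (Fin n) (Fin n) ℝ be defined by M i j = (if π i = j then a i j else 0) + (if τ i = j then a i j else 0) (the matrix of structural constants of E^n_{π,τ}). Let M_{n−1} denote the top-left (n−1)×(n−1) submatrix of M, and for i₀ : Fin (n−1) let Mᵀ_{i₀,n} denote the matrix obtained from the transpose of M_{n−1} by replacing its i₀-th column with the column vector (M (n−1) j)_{j : Fin (n−1)} formed by the first n−1 entries of the last row of M. If the rank of M equals n − 1 and det(Mᵀ_{i₀,n}) * det(M_{n−1}) > 0 for some i₀ : Fin (n−1), then the only absolute nilpotent element of E^n_{π,τ} is x = 0. -/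
/-!
Squaring `x` gives `x * x = (x ⊙ x) ᵥ* M`, so an absolute nilpotent yields a linear relation
`Aᵀ u + λ b = 0` with `u = (x₀², …, x_{n-2}²) ≥ 0`, `λ = x_{n-1}² ≥ 0`, `A = M_{n−1}` and `b` the
last row of `M`. Cramer's rule gives `det A · u_{i₀} = -λ · det (Mᵀ_{i₀,n})`; multiplying by
`det A` makes the left side nonnegative and the right side `-λ` times a positive number, so
`λ = 0`, and then `det A ≠ 0` forces `u = 0`.
-/

open Matrix

def structMatrix {ι : Type*} [DecidableEq ι] (π τ : Equiv.Perm ι) (a : ι → ι → ℝ) :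
    Matrix ι ι ℝ :=
  Matrix.of fun i j => (if π i = j then a i j else 0) + (if τ i = j then a i j else 0)

theorem evolMul_self_eq_vecMul {ι : Type*} [Fintype ι] [DecidableEq ι]
    (π τ : Equiv.Perm ι) (a : ι → ι → ℝ) (x : ι → ℝ) :
    evolMul π τ a x x = (fun i => x i * x i) ᵥ* structMatrix π τ a := by
  funext j
  refine Finset.sum_congr rfl fun i _ => ?_
  by_cases hπ : π i = j <;> by_cases hτ : τ i = j <;> simp [structMatrix, hπ, hτ]

theorem Matrix.cramer_mulVec {m R : Type*} [Fintype m] [DecidableEq m] [CommRing R]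
    (A : Matrix m m R) (u : m → R) : cramer A (A *ᵥ u) = A.det • u := by
  rw [cramer_eq_adjugate_mulVec, mulVec_mulVec, adjugate_mul, smul_mulVec, one_mulVec]

theorem Matrix.vecMul_castSucc {R : Type*} [CommSemiring R] {k : ℕ}
    (M : Matrix (Fin (k + 1)) (Fin (k + 1)) R) (v : Fin (k + 1) → R) :
    (fun j => (v ᵥ* M) j.castSucc) =
      (M.submatrix Fin.castSucc Fin.castSucc)ᵀ *ᵥ (v ∘ Fin.castSucc) +
        v (Fin.last k) • fun j => M (Fin.last k) j.castSucc := by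
  funext j
  simp [vecMul, mulVec, dotProduct, Fin.sum_univ_castSucc, mul_comm]

theorem Matrix.eq_zero_of_mulVec_add_smul_eq_zero {m R : Type*} [Fintype m] [DecidableEq m]
    [CommRing R] [LinearOrder R] [IsStrictOrderedRing R]
    {A : Matrix m m R} {u b : m → R} {c : R} (hu : 0 ≤ u) (hc : 0 ≤ c)
    (h : A *ᵥ u + c • b = 0) {i₀ : m} (hdet : 0 < (A.updateCol i₀ b).det * A.det) :
    c = 0 ∧ u = 0 := by
  have hAu : A *ᵥ u = -c • b := by rw [neg_smul, eq_neg_iff_add_eq_zero, h]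
  have hcramer : A.det • u = -c • cramer A b := by
    rw [← cramer_mulVec, hAu, map_smul]
  have hi₀ : A.det * A.det * u i₀ = -(c * ((A.updateCol i₀ b).det * A.det)) := by
    have := congrFun hcramer i₀
    simp only [Pi.smul_apply, smul_eq_mul, cramer_apply] at this
    linear_combination A.det * this
  have hc0 : c = 0 := by
    have : 0 ≤ A.det * A.det * u i₀ := mul_nonneg (mul_self_nonneg _) (hu i₀)
    nlinarith
  have hdetA : A.det ≠ 0 := by
    rintro hA
    simp [hA] at hdet
  refine ⟨hc0, ?_⟩
  simpa [hc0, hdetA] using hcramer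

/-- if the matrix `M` of structural constants of `E^n_{π,τ}` (with `n ≥ 2`)
has rank `n − 1` and `det (Mᵀ_{i₀,n}) * det (M_{n−1}) > 0` for some `i₀`, where
`M_{n−1}` is the top-left `(n−1)×(n−1)` submatrix of `M` and `Mᵀ_{i₀,n}` is obtained
from the transpose of `M_{n−1}` by replacing its `i₀`-th column with the first `n−1`
entries of the last row of `M`, then the only absolute nilpotent element of
`E^n_{π,τ}` is `x = 0`. -/
theorem stmt_4 (n : ℕ) (hn : 2 ≤ n) (π τ : Equiv.Perm (Fin n))
    (a : Fin n → Fin n → ℝ) (M : Matrix (Fin n) (Fin n) ℝ)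
    (hM : ∀ i j, M i j = (if π i = j then a i j else 0) + (if τ i = j then a i j else 0))
    (Mn1 : Matrix (Fin (n - 1)) (Fin (n - 1)) ℝ)
    (hMn1 : Mn1 = M.submatrix (Fin.castLE (Nat.sub_le n 1)) (Fin.castLE (Nat.sub_le n 1)))
    (i₀ : Fin (n - 1))
    (hdet : (Mn1.transpose.updateCol i₀
        (fun j : Fin (n - 1) => M ⟨n - 1, by omega⟩ (Fin.castLE (Nat.sub_le n 1) j))).det
          * Mn1.det > 0) :
    ∀ x : Fin n → ℝ, evolMul π τ a x x = 0 → x = 0 := by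
  obtain ⟨k, rfl⟩ : ∃ k, n = k + 1 := ⟨n - 1, by omega⟩
  intro x hx
  have hMs : M = structMatrix π τ a := Matrix.ext hM
  rw [← det_transpose Mn1] at hdet
  subst hMs hMn1
  rw [evolMul_self_eq_vecMul] at hx
  have hrel := Matrix.vecMul_castSucc (structMatrix π τ a) fun i => x i * x i
  rw [hx] at hrel
  obtain ⟨hlast, hinit⟩ := Matrix.eq_zero_of_mulVec_add_smul_eq_zero
    (fun i => mul_self_nonneg (x i.castSucc)) (mul_self_nonneg (x (Fin.last k)))
    hrel.symm hdet
  funext i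
  induction i using Fin.lastCases with
  | last => exact mul_self_eq_zero.mp hlast
  | cast j => exact mul_self_eq_zero.mp (congrFun hinit j)
end

section
/- Suppose b k * c (k + 1) ≠ 0 for all k : ZMod p. Then every absolute nilpotent element x of E^n_{π,τ} satisfies either x (l k) = 0 for all k : ZMod p, or x (l k) ≠ 0 for all k : ZMod p. -/
/-- along a cycle `l : ZMod p → Fin n` of `τ⁻¹ ∘ π`, if
`b k * c (k+1) ≠ 0` for all `k`, then any absolute nilpotent element `x` of `E^n_{π,τ}`
vanishes at all the `l k`, or is nonzero at all the `l k`. -/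
theorem stmt_6 (n p : ℕ) [NeZero p] (π τ : Equiv.Perm (Fin n))
    (a : Fin n → Fin n → ℝ)
    (l : ZMod p → Fin n) (hl : Function.Injective l)
    (hcyc : ∀ k : ZMod p, τ⁻¹ (π (l k)) = l (k + 1))
    (b c : ZMod p → ℝ)
    (hb : ∀ k, b k = a (l k) (π (l k)))
    (hc : ∀ k, c k = a (l k) (τ (l k)))
    (hbc : ∀ k : ZMod p, b k * c (k + 1) ≠ 0) :
    ∀ x : Fin n → ℝ, evolMul π τ a x x = 0 →
      (∀ k : ZMod p, x (l k) = 0) ∨ (∀ k : ZMod p, x (l k) ≠ 0) := by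
  intro x hx
  -- key equation at j = π (l k)
  have key : ∀ k : ZMod p,
      x (l k) * x (l k) * b k + x (l (k+1)) * x (l (k+1)) * c (k+1) = 0 := by
    intro k
    have hτ : τ (l (k+1)) = π (l k) := by
      rw [← hcyc k]; simp
    have h1 := congrFun hx (π (l k))
    simp only [evolMul, Pi.zero_apply] at h1
    have hsum : ∀ i : Fin n, x i * x i *
        ((if π i = π (l k) then a i (π i) else 0) +
          (if τ i = π (l k) then a i (τ i) else 0)) =
        (if i = l k then x i * x i * a i (π i) else 0) +
        (if i = l (k+1) then x i * x i * a i (τ i) else 0) := by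
      intro i
      rw [mul_add, mul_ite, mul_zero, mul_ite, mul_zero]
      congr 2
      · simp [π.injective.eq_iff, eq_comm]
      · rw [← hτ, τ.injective.eq_iff]
    rw [Finset.sum_congr rfl fun i _ => hsum i, Finset.sum_add_distrib,
      Finset.sum_ite_eq' Finset.univ, Finset.sum_ite_eq' Finset.univ] at h1
    simpa [hb, hc, hτ] using h1
  have hbne : ∀ k : ZMod p, b k ≠ 0 := fun k => fun h => hbc k (by rw [h, zero_mul])
  have hcne : ∀ k : ZMod p, c (k+1) ≠ 0 := fun k => fun h => hbc k (by rw [h, mul_zero])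
  have step : ∀ k : ZMod p, (x (l k) = 0 ↔ x (l (k+1)) = 0) := by
    intro k
    have hk := key k
    constructor
    · intro h0
      rw [h0] at hk
      have : x (l (k+1)) * x (l (k+1)) * c (k+1) = 0 := by linarith
      rcases mul_eq_zero.1 this with h | h
      · exact (mul_self_eq_zero).1 h
      · exact absurd h (hcne k)
    · intro h0
      rw [h0] at hk
      have : x (l k) * x (l k) * b k = 0 := by linarith
      rcases mul_eq_zero.1 this with h | h
      · exact (mul_self_eq_zero).1 h
      · exact absurd h (hbne k)
  have aux : ∀ m : ℕ, (x (l 0) = 0 ↔ x (l (m : ZMod p)) = 0) := by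
    intro m
    induction m with
    | zero => simp
    | succ m ih =>
        rw [ih]
        have := step (m : ZMod p)
        push_cast
        exact this
  have auxall : ∀ k : ZMod p, (x (l 0) = 0 ↔ x (l k) = 0) := by
    intro k
    obtain ⟨m, rfl⟩ := ZMod.natCast_rightInverse.surjective k
    exact aux m
  by_cases h0 : x (l 0) = 0
  · exact Or.inl fun k => (auxall k).1 h0
  · exact Or.inr fun k hk => h0 ((auxall k).2 hk)
end

section
/- Suppose b k * c (k + 1) ≠ 0 for all k : ZMod p, and b k₀ * c (k₀ + 1) > 0 for some k₀ : ZMod p. Then every absolute nilpotent element x of E^n_{π,τ} satisfies x (l k) = 0 for all k : ZMod p. -/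
/-- along a cycle `l : ZMod p → Fin n` of `τ⁻¹ ∘ π`, if
`b k * c (k+1) ≠ 0` for all `k` and `b k₀ * c (k₀+1) > 0` for some `k₀`, then every
absolute nilpotent element `x` of `E^n_{π,τ}` vanishes at all the `l k`. -/
theorem stmt_7 (n p : ℕ) [NeZero p] (π τ : Equiv.Perm (Fin n))
    (a : Fin n → Fin n → ℝ)
    (l : ZMod p → Fin n) (hl : Function.Injective l)
    (hcyc : ∀ k : ZMod p, τ⁻¹ (π (l k)) = l (k + 1))
    (b c : ZMod p → ℝ)
    (hb : ∀ k, b k = a (l k) (π (l k)))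
    (hc : ∀ k, c k = a (l k) (τ (l k)))
    (hbc : ∀ k : ZMod p, b k * c (k + 1) ≠ 0)
    (k₀ : ZMod p) (hpos : 0 < b k₀ * c (k₀ + 1)) :
    ∀ x : Fin n → ℝ, evolMul π τ a x x = 0 → ∀ k : ZMod p, x (l k) = 0 := by
  intro x hx
  -- τ (l (k+1)) = π (l k)
  have htau : ∀ k : ZMod p, τ (l (k + 1)) = π (l k) := by
    intro k
    rw [← hcyc k]
    simp
  -- key identity
  have key : ∀ k : ZMod p,
      b k * (x (l k))^2 + c (k + 1) * (x (l (k + 1)))^2 = 0 := by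
    intro k
    have hj := congrFun hx (π (l k))
    simp only [evolMul, Pi.zero_apply] at hj
    have hsum : ∀ i : Fin n,
        x i * x i * ((if π i = π (l k) then a i (π i) else 0)
          + (if τ i = π (l k) then a i (τ i) else 0))
        = ((if i = l k then x i * x i * a i (π i) else 0)
          + (if i = l (k + 1) then x i * x i * a i (τ i) else 0)) := by
      intro i
      have h1 : π i = π (l k) ↔ i = l k := by simp
      have h2 : τ i = π (l k) ↔ i = l (k + 1) := by
        rw [← htau k]; simp
      simp only [h1, h2, mul_add, mul_ite, mul_zero]
    rw [Finset.sum_congr rfl (fun i _ => hsum i), Finset.sum_add_distrib,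
      Finset.sum_ite_eq' Finset.univ (l k), Finset.sum_ite_eq' Finset.univ (l (k + 1))] at hj
    simp only [Finset.mem_univ, if_true] at hj
    rw [hb k, hc (k + 1)]
    nlinarith [hj]
  have hbne : ∀ k, b k ≠ 0 := fun k => fun h => hbc k (by rw [h]; ring)
  have hcne : ∀ k, c (k + 1) ≠ 0 := fun k => fun h => hbc k (by rw [h]; ring)
  -- zero-propagation in both directions
  have hiff : ∀ k : ZMod p, x (l k) = 0 ↔ x (l (k + 1)) = 0 := by
    intro k
    have hk := key k
    constructor
    · intro h
      have : c (k + 1) * (x (l (k + 1)))^2 = 0 := by rw [h] at hk; linarith [hk]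
      rcases mul_eq_zero.1 this with h' | h'
      · exact absurd h' (hcne k)
      · exact pow_eq_zero_iff (by norm_num) |>.1 h'
    · intro h
      have : b k * (x (l k))^2 = 0 := by rw [h] at hk; linarith [hk]
      rcases mul_eq_zero.1 this with h' | h'
      · exact absurd h' (hbne k)
      · exact pow_eq_zero_iff (by norm_num) |>.1 h'
  -- x (l k₀) = 0
  have hz0 : x (l k₀) = 0 := by
    by_contra h0
    have h1 : x (l (k₀ + 1)) ≠ 0 := fun h => h0 ((hiff k₀).2 h)
    have hs : (0:ℝ) < (x (l k₀))^2 := by positivity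
    have ht : (0:ℝ) < (x (l (k₀ + 1)))^2 := by positivity
    have hk := key k₀
    have h2 : b k₀ * c (k₀ + 1) * (x (l k₀))^2
        + (c (k₀ + 1))^2 * (x (l (k₀ + 1)))^2 = 0 := by
      linear_combination c (k₀ + 1) * hk
    linarith [mul_pos hpos hs, mul_nonneg (sq_nonneg (c (k₀ + 1))) ht.le]
  -- propagate forward
  have haux : ∀ t : ℕ, x (l (k₀ + (t : ZMod p))) = 0 := by
    intro t
    induction t with
    | zero => simpa using hz0
    | succ t ih =>
      have : (((t : ℕ) + 1 : ℕ) : ZMod p) = (t : ZMod p) + 1 := by push_cast; ring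
      rw [this, ← add_assoc]
      exact (hiff (k₀ + t)).1 ih
  intro k
  have ht : (((k - k₀).val : ℕ) : ZMod p) = k - k₀ := ZMod.natCast_rightInverse (k - k₀)
  set t := (k - k₀).val with htd
  have : k = k₀ + (t : ZMod p) := by rw [ht]; ring
  rw [this]
  exact haux t
end

section
/- Suppose b k * c (k + 1) < 0 for all k : ZMod p, and (−1)^p * ∏_{k : ZMod p} b k = ∏_{k : ZMod p} c k. Then: (a) every absolute nilpotent element x of E^n_{π,τ} satisfies, for every natural number k with 1 ≤ k ≤ p − 1, (x (l k))^2 = ((−1)^k * (b 0 * b 1 * ⋯ * b (k−1))) / (c 1 * c 2 * ⋯ * c k) * (x (l 0))^2 (all indices of b, c and l taken in ZMod p); (b) conversely, for every real number t there exists an absolute nilpotent element x of E^n_{π,τ} with x (l 0) = t. -/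
lemma evolMul_self_apply {ι : Type*} [Fintype ι] [DecidableEq ι]
    (π τ : Equiv.Perm ι) (a : ι → ι → ℝ) (x : ι → ℝ) (j : ι) :
    evolMul π τ a x x j =
      x (π.symm j) * x (π.symm j) * a (π.symm j) j
        + x (τ.symm j) * x (τ.symm j) * a (τ.symm j) j := by
  have h1 : ∀ σ : Equiv.Perm ι,
      (∑ i, if σ i = j then x i * x i * a i (σ i) else 0)
        = x (σ.symm j) * x (σ.symm j) * a (σ.symm j) j := by
    intro σ
    rw [Finset.sum_congr rfl fun i _ =>
      if_congr (σ.apply_eq_iff_eq_symm_apply) rfl rfl]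
    rw [Finset.sum_ite_eq' Finset.univ (σ.symm j) fun i => x i * x i * a i (σ i)]
    simp
  simp only [evolMul, mul_add, Finset.sum_add_distrib, mul_ite, mul_zero]
  rw [h1 π, h1 τ]

/-- along a cycle `l : ZMod p → Fin n` of `τ⁻¹ ∘ π`, if
`b k * c (k+1) < 0` for all `k` and `(−1)^p * ∏ b k = ∏ c k`, then (a) every absolute
nilpotent `x` of `E^n_{π,τ}` satisfies, for `1 ≤ k ≤ p − 1`,
`(x (l k))^2 = ((−1)^k * (b 0 ⋯ b (k−1))) / (c 1 ⋯ c k) * (x (l 0))^2`, and (b) for every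
`t : ℝ` there is an absolute nilpotent `x` with `x (l 0) = t`. -/
theorem stmt_9 (n p : ℕ) [NeZero p] (π τ : Equiv.Perm (Fin n))
    (a : Fin n → Fin n → ℝ)
    (l : ZMod p → Fin n) (hl : Function.Injective l)
    (hcyc : ∀ k : ZMod p, τ⁻¹ (π (l k)) = l (k + 1))
    (b c : ZMod p → ℝ)
    (hb : ∀ k, b k = a (l k) (π (l k)))
    (hc : ∀ k, c k = a (l k) (τ (l k)))
    (hbc : ∀ k : ZMod p, b k * c (k + 1) < 0)
    (hprod : (-1 : ℝ) ^ p * ∏ k : ZMod p, b k = ∏ k : ZMod p, c k) :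
    (∀ x : Fin n → ℝ, evolMul π τ a x x = 0 →
      ∀ k : ℕ, 1 ≤ k → k ≤ p - 1 →
        (x (l (k : ZMod p))) ^ 2 =
          ((-1 : ℝ) ^ k * ∏ i ∈ Finset.range k, b (i : ZMod p)) /
              (∏ i ∈ Finset.range k, c ((i + 1 : ℕ) : ZMod p)) *
            (x (l 0)) ^ 2) ∧
    (∀ t : ℝ, ∃ x : Fin n → ℝ, evolMul π τ a x x = 0 ∧ x (l 0) = t) := by
  -- basic facts
  have hcyc' : ∀ k : ZMod p, τ.symm (π (l k)) = l (k + 1) := hcyc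
  have hπτ : ∀ k : ZMod p, τ (l (k + 1)) = π (l k) := by
    intro k
    rw [← hcyc' k]
    simp
  have hb0 : ∀ k, b k ≠ 0 := by
    intro k hk
    have := hbc k
    rw [hk, zero_mul] at this
    exact lt_irrefl 0 this
  have hc0 : ∀ k, c k ≠ 0 := by
    intro k hk
    have := hbc (k - 1)
    rw [sub_add_cancel, hk, mul_zero] at this
    exact lt_irrefl 0 this
  have hcast : ∀ i : ℕ, ((i + 1 : ℕ) : ZMod p) = (i : ZMod p) + 1 := by
    intro i; push_cast; ring
  -- the "star" equation for absolute nilpotents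
  have hstar : ∀ x : Fin n → ℝ, evolMul π τ a x x = 0 →
      ∀ k : ZMod p, x (l k) ^ 2 * b k + x (l (k + 1)) ^ 2 * c (k + 1) = 0 := by
    intro x hx k
    have h := congrFun hx (π (l k))
    rw [evolMul_self_apply] at h
    rw [Equiv.symm_apply_apply, hcyc' k] at h
    have ha : a (l (k + 1)) (π (l k)) = c (k + 1) := by
      rw [hc (k + 1), hπτ k]
    rw [ha, ← hb k] at h
    simp only [Pi.zero_apply] at h
    nlinarith [h]
  refine ⟨?_, ?_⟩
  · -- part (a)
    intro x hx
    have key : ∀ k : ℕ,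
        (x (l (k : ZMod p))) ^ 2 =
          ((-1 : ℝ) ^ k * ∏ i ∈ Finset.range k, b (i : ZMod p)) /
              (∏ i ∈ Finset.range k, c ((i + 1 : ℕ) : ZMod p)) *
            (x (l 0)) ^ 2 := by
      intro k
      induction k with
      | zero => simp
      | succ k ih =>
        have h := hstar x hx (k : ZMod p)
        have hcne : c ((k : ZMod p) + 1) ≠ 0 := hc0 _
        have hpne : (∏ i ∈ Finset.range k, c ((i + 1 : ℕ) : ZMod p)) ≠ 0 :=
          Finset.prod_ne_zero_iff.mpr (fun i _ => hc0 _)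
        have hxk1 : x (l ((k : ZMod p) + 1)) ^ 2
            = -(b (k : ZMod p)) * x (l (k : ZMod p)) ^ 2 / c ((k : ZMod p) + 1) := by
          field_simp
          linarith
        rw [Finset.prod_range_succ, Finset.prod_range_succ]
        rw [show ((k + 1 : ℕ) : ZMod p) = (k : ZMod p) + 1 from hcast k]
        rw [hxk1, ih]
        rw [pow_succ]
        field_simp
        ring
    exact fun k _ _ => key k
  · -- part (b)
    intro t
    set f : ℕ → ℝ := fun i => -(b (i : ZMod p)) / c (((i + 1 : ℕ)) : ZMod p) with hf
    have hf_pos : ∀ i, 0 < f i := by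
      intro i
      have hlt : b (i : ZMod p) * c ((i : ZMod p) + 1) < 0 := hbc _
      have : b (i : ZMod p) / c ((i : ZMod p) + 1) < 0 := by
        rcases mul_neg_iff.mp hlt with ⟨h1, h2⟩ | ⟨h1, h2⟩
        · exact div_neg_of_pos_of_neg h1 h2
        · exact div_neg_of_neg_of_pos h1 h2
      have h2 := neg_pos.mpr this
      simpa [hf, hcast i, neg_div] using h2
    set g : ℕ → ℝ := fun m => (∏ i ∈ Finset.range m, f i) * t ^ 2 with hg
    have hg_nonneg : ∀ m, 0 ≤ g m :=
      fun m => mul_nonneg (Finset.prod_nonneg fun i _ => (hf_pos i).le) (sq_nonneg t)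
    have hg_succ : ∀ m, g (m + 1) = f m * g m := by
      intro m
      simp only [hg, Finset.prod_range_succ]
      ring
    have hg0 : g 0 = t ^ 2 := by simp [hg]
    -- reindexing over the cycle
    have hre : ∀ F : ZMod p → ℝ,
        (∏ i ∈ Finset.range p, F (i : ZMod p)) = ∏ k : ZMod p, F k := by
      intro F
      refine Finset.prod_nbij' (fun i => (i : ZMod p)) (fun k => k.val)
        (fun _ _ => Finset.mem_univ _) (fun k _ => Finset.mem_range.mpr (ZMod.val_lt k))
        (fun i hi => ZMod.val_natCast_of_lt (Finset.mem_range.mp hi))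
        (fun k _ => ZMod.natCast_zmod_val k) (fun _ _ => rfl)
    have hprodc : (∏ k : ZMod p, c (k + 1)) = ∏ k : ZMod p, c k :=
      Fintype.prod_equiv (Equiv.addRight 1) _ _ (fun k => rfl)
    have hcprod_ne : (∏ k : ZMod p, c k) ≠ 0 :=
      Finset.prod_ne_zero_iff.mpr (fun k _ => hc0 k)
    have hgp : (∏ i ∈ Finset.range p, f i) = 1 := by
      have h1 : (∏ i ∈ Finset.range p, f i) = ∏ k : ZMod p, -(b k) / c (k + 1) := by
        rw [← hre (fun k => -(b k) / c (k + 1))]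
        exact Finset.prod_congr rfl (fun i _ => by simp [hf, hcast i])
      rw [h1, Finset.prod_div_distrib]
      have h2 : (∏ k : ZMod p, -(b k)) = (-1 : ℝ) ^ p * ∏ k : ZMod p, b k := by
        have : (∏ k : ZMod p, -(b k)) = ∏ k : ZMod p, ((-1 : ℝ) * b k) := by
          refine Finset.prod_congr rfl (fun k _ => by ring)
        rw [this, Finset.prod_mul_distrib, Finset.prod_const, Finset.card_univ,
          ZMod.card p]
      rw [h2, hprodc, hprod]
      exact div_self hcprod_ne
    have hgperiod : g p = t ^ 2 := by simp [hg, hgp]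
    -- the recurrence over ZMod p
    have hval : ∀ k : ZMod p, ((k.val : ℕ) : ZMod p) = k := fun k => ZMod.natCast_zmod_val k
    have hrec : ∀ k : ZMod p, g ((k + 1 : ZMod p).val) = f k.val * g k.val := by
      intro k
      have hklt : k.val < p := ZMod.val_lt k
      have hsucc : ((k.val + 1 : ℕ) : ZMod p) = k + 1 := by
        rw [Nat.cast_add, Nat.cast_one, hval k]
      rcases Nat.lt_or_ge (k.val + 1) p with hlt | hge
      · have hv : (k + 1 : ZMod p).val = k.val + 1 := by
          rw [← hsucc, ZMod.val_natCast_of_lt hlt]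
        rw [hv, hg_succ]
      · have hpe : k.val + 1 = p := Nat.le_antisymm (Nat.succ_le_of_lt hklt) hge
        have hv : (k + 1 : ZMod p).val = 0 := by
          rw [← hsucc, hpe, ZMod.natCast_self, ZMod.val_zero]
        rw [hv]
        calc g 0 = g p := by rw [hg0, hgperiod]
          _ = g (k.val + 1) := by rw [hpe]
          _ = f k.val * g k.val := hg_succ k.val
    -- the key algebraic relation
    have hkey : ∀ k : ZMod p,
        g k.val * b k + g ((k + 1 : ZMod p).val) * c (k + 1) = 0 := by
      intro k
      rw [hrec k]
      have hfk : f k.val = -(b k) / c (k + 1) := by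
        simp only [hf, hcast k.val, hval k]
      rw [hfk]
      have hcne : c (k + 1) ≠ 0 := hc0 _
      field_simp
      ring
    -- construct the nilpotent element
    classical
    set s : ZMod p → ℝ := fun k => if k = 0 then t else Real.sqrt (g k.val) with hs
    have hs_sq : ∀ k, s k ^ 2 = g k.val := by
      intro k
      by_cases hk : k = 0
      · simp [hs, hk, hg0, ZMod.val_zero]
      · simp only [hs, if_neg hk]
        exact Real.sq_sqrt (hg_nonneg _)
    refine ⟨fun j => if h : ∃ k : ZMod p, l k = j then s h.choose else 0, ?_, ?_⟩
    · -- evolMul = 0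
      have hxl : ∀ k : ZMod p,
          (if h : ∃ k' : ZMod p, l k' = l k then s h.choose else 0) = s k := by
        intro k
        have hex : ∃ k' : ZMod p, l k' = l k := ⟨k, rfl⟩
        simp only [dif_pos hex]
        exact congrArg s (hl hex.choose_spec)
      funext j
      rw [evolMul_self_apply]
      simp only [Pi.zero_apply]
      by_cases hmem : ∃ k : ZMod p, l k = π.symm j
      · obtain ⟨k, hk⟩ := hmem
        have hj : j = π (l k) := by rw [hk, Equiv.apply_symm_apply]
        have hτ : τ.symm j = l (k + 1) := by rw [hj, hcyc' k]
        rw [show π.symm j = l k from hk.symm, hτ, hxl k, hxl (k + 1)]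
        have ha1 : a (l k) j = b k := by rw [hj, ← hb k]
        have ha2 : a (l (k + 1)) j = c (k + 1) := by rw [hj, ← hπτ k, ← hc (k + 1)]
        rw [ha1, ha2]
        have := hkey k
        rw [← hs_sq k, ← hs_sq (k + 1)] at this
        nlinarith [this]
      · have hx1 : (if h : ∃ k : ZMod p, l k = π.symm j then s h.choose else 0)
            = 0 := dif_neg hmem
        have hmem2 : ¬ ∃ m : ZMod p, l m = τ.symm j := by
          rintro ⟨m, hm⟩
          apply hmem
          refine ⟨m - 1, ?_⟩
          have hj' : τ (l ((m - 1) + 1)) = π (l (m - 1)) := hπτ (m - 1)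
          rw [sub_add_cancel, hm, Equiv.apply_symm_apply] at hj'
          rw [hj', Equiv.symm_apply_apply]
        have hx2 : (if h : ∃ k : ZMod p, l k = τ.symm j then s h.choose else 0)
            = 0 := dif_neg hmem2
        rw [hx1, hx2]
        ring
    · -- value at l 0
      have hex : ∃ k' : ZMod p, l k' = l 0 := ⟨0, rfl⟩
      show (if h : ∃ k' : ZMod p, l k' = l 0 then s h.choose else 0) = t
      rw [dif_pos hex]
      rw [show hex.choose = 0 from hl hex.choose_spec]
      simp [hs]
end

section
/- Suppose either (b k₀ = 0 for some k₀ : ZMod p and c k ≠ 0 for all k : ZMod p) or (c k₀ = 0 for some k₀ : ZMod p and b k ≠ 0 for all k : ZMod p). Then every absolute nilpotent element x of E^n_{π,τ} satisfies x (l k) = 0 for all k : ZMod p. -/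
/-- along a cycle `l : ZMod p → Fin n` of `τ⁻¹ ∘ π`, if `b k₀ = 0` for
some `k₀` while `c k ≠ 0` for all `k` (or symmetrically with `b` and `c` interchanged),
then every absolute nilpotent element `x` of `E^n_{π,τ}` vanishes at all the `l k`. -/
theorem stmt_10 (n p : ℕ) [NeZero p] (π τ : Equiv.Perm (Fin n))
    (a : Fin n → Fin n → ℝ)
    (l : ZMod p → Fin n) (hl : Function.Injective l)
    (hcyc : ∀ k : ZMod p, τ⁻¹ (π (l k)) = l (k + 1))
    (b c : ZMod p → ℝ)
    (hb : ∀ k, b k = a (l k) (π (l k)))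
    (hc : ∀ k, c k = a (l k) (τ (l k)))
    (hyp : ((∃ k₀ : ZMod p, b k₀ = 0) ∧ ∀ k : ZMod p, c k ≠ 0) ∨
           ((∃ k₀ : ZMod p, c k₀ = 0) ∧ ∀ k : ZMod p, b k ≠ 0)) :
    ∀ x : Fin n → ℝ, evolMul π τ a x x = 0 → ∀ k : ZMod p, x (l k) = 0 := by
  intro x hx
  -- key recursion
  have hπτ : ∀ k : ZMod p, π (l k) = τ (l (k + 1)) := by
    intro k
    have := hcyc k
    rw [Equiv.Perm.inv_eq_iff_eq] at this
    exact this.symm ▸ rfl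
  have key : ∀ k : ZMod p, x (l k) ^ 2 * b k + x (l (k + 1)) ^ 2 * c (k + 1) = 0 := by
    intro k
    have h' := congrFun hx (τ (l (k + 1)))
    simp only [evolMul, Pi.zero_apply] at h'
    set j := τ (l (k + 1)) with hj
    have e1 : ∀ i : Fin n, π i = j ↔ i = l k := by
      intro i
      constructor
      · intro h; have : i = π⁻¹ j := by rw [Equiv.Perm.eq_inv_iff_eq]; exact h
        rw [this, hj, ← hπτ k]; simp
      · rintro rfl; exact hπτ k
    have e2 : ∀ i : Fin n, τ i = j ↔ i = l (k + 1) := by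
      intro i; constructor
      · intro h; exact τ.injective (h.trans rfl)
      · rintro rfl; rfl
    have : (∑ i, x i * x i *
        ((if π i = j then a i (π i) else 0) + (if τ i = j then a i (τ i) else 0)))
        = ∑ i, ((if i = l k then x i * x i * a i (π i) else 0)
          + (if i = l (k + 1) then x i * x i * a i (τ i) else 0)) := by
      apply Finset.sum_congr rfl
      intro i _
      rw [mul_add]
      congr 1 <;> simp only [mul_ite, mul_zero, e1 i, e2 i]
    rw [this, Finset.sum_add_distrib, Finset.sum_ite_eq' Finset.univ (l k),
      Finset.sum_ite_eq' Finset.univ (l (k + 1))] at h'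
    simp only [Finset.mem_univ, if_true] at h'
    rw [hb, hc]
    rw [← hπτ k] at h' ⊢
    nlinarith [h']
  have sq0 : ∀ k : ZMod p, x (l k) ^ 2 = 0 → x (l k) = 0 := fun k h => by
    exact pow_eq_zero_iff (by norm_num) |>.mp h
  rcases hyp with ⟨⟨k₀, hk₀⟩, hcne⟩ | ⟨⟨k₀, hk₀⟩, hbne⟩
  · have main : ∀ m : ℕ, x (l (k₀ + 1 + m)) = 0 := by
      intro m
      induction m with
      | zero =>
        have := key k₀
        rw [hk₀, mul_zero, zero_add] at this
        apply sq0
        have := mul_eq_zero.mp this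
        simpa [hcne (k₀ + 1)] using this
      | succ m ih =>
        have h := key (k₀ + 1 + m)
        rw [ih, zero_pow (by norm_num), zero_mul, zero_add] at h
        have := mul_eq_zero.mp h
        have h2 : x (l (k₀ + 1 + ↑m + 1)) ^ 2 = 0 := by
          simpa [hcne (k₀ + 1 + ↑m + 1)] using this
        have := sq0 _ h2
        convert this using 3
        push_cast
        ring
    intro k
    have : k = k₀ + 1 + ((k - k₀ - 1).val : ZMod p) := by
      rw [ZMod.natCast_val, ZMod.cast_id]; ring
    rw [this]; exact main _
  · have main : ∀ m : ℕ, x (l (k₀ - 1 - m)) = 0 := by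
      intro m
      induction m with
      | zero =>
        have h := key (k₀ - 1)
        rw [show k₀ - 1 + 1 = k₀ by ring, hk₀, mul_zero, add_zero] at h
        have := mul_eq_zero.mp h
        apply sq0
        simpa [hbne (k₀ - 1), show k₀ - 1 - (0:ℕ) = k₀ - 1 by push_cast; ring]
          using this
      | succ m ih =>
        have h := key (k₀ - 1 - (m + 1 : ℕ))
        have e : k₀ - 1 - (m + 1 : ℕ) + 1 = k₀ - 1 - m := by push_cast; ring
        rw [e, ih, zero_pow (by norm_num), zero_mul, add_zero] at h
        have h2 : x (l (k₀ - 1 - ((m + 1 : ℕ) : ZMod p))) ^ 2 = 0 :=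
          (mul_eq_zero.mp h).resolve_right (hbne _)
        apply sq0
        exact h2
    intro k
    have : k = k₀ - 1 - ((k₀ - 1 - k).val : ZMod p) := by
      rw [ZMod.natCast_val, ZMod.cast_id]; ring
    rw [this]; exact main _
end

section
/- Let a, b, c, d be nonzero real numbers with b*d ≠ a*c. Set p = (3*c*d − b^2) / (3*(b*d − a*c)^2), q = 2*(9*b*c*d + b^3) / (27*(b*d − a*c)^3) − c/(b*d − a*c)^2, Δ = (q/2)^2 + (p/3)^3, and let S = {x : ℝ | (b*d − a*c)^2 * x^4 − 2*b*(b*d − a*c) * x^3 + (b^2 + c*d) * x^2 − c*x = 0}. Then 0 ∈ S, and: if Δ < 0 then S has exactly 4 elements; if Δ > 0 then S has exactly 2 elements; if Δ = 0, p ≠ 0 and q ≠ 0 then S has exactly 3 elements; if Δ = 0 and p = 0 and q = 0 then S = {0, 2*b/(3*(b*d − a*c))}. -/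
/-!
Writing `k = b*d - a*c` and `t = 2*b/(3*k)`, the quartic factors as `k^2 * x * f (x - t)`, where
`f y = y^3 + p*y + q` is the depressed cubic. Its value at `-t` is `-c/k^2 ≠ 0`, so the nonzero
solutions of the quartic are exactly the roots of `f` shifted by `t`, and the count reduces to the
classical count of real roots of a depressed cubic by the sign of `Δ`: two distinct roots `x ≠ y`
satisfy `x^2 + x*y + y^2 + p = 0`, which forces `Δ ≤ 0`; for `Δ < 0` the intermediate value
theorem produces three roots; and for `Δ = 0` the cubic is `(y - 3q/p) * (y + 3q/(2p))^2`.
-/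

open Set Polynomial

def depressedCubicRoots (p q : ℝ) : Set ℝ := {y | y ^ 3 + p * y + q = 0}

namespace depressedCubicRoots

variable {p q : ℝ}

@[simp]
lemma mem_iff {y : ℝ} : y ∈ depressedCubicRoots p q ↔ y ^ 3 + p * y + q = 0 := Iff.rfl

lemma finite (p q : ℝ) : (depressedCubicRoots p q).Finite := by
  have h : (X ^ 3 + C p * X + C q : ℝ[X]) ≠ 0 := fun h => by
    simpa using congrArg (coeff · 3) h
  convert finite_setOfPred_isRoot h using 1
  ext
  simp

lemma sq_add_mul_add_sq_add_eq_zero {x y : ℝ} (hx : x ∈ depressedCubicRoots p q)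
    (hy : y ∈ depressedCubicRoots p q) (hxy : x ≠ y) : x ^ 2 + x * y + y ^ 2 + p = 0 := by
  have h : (x - y) * (x ^ 2 + x * y + y ^ 2 + p) = 0 := by
    linear_combination mem_iff.mp hx - mem_iff.mp hy
  exact (mul_eq_zero.mp h).resolve_left (sub_ne_zero.mpr hxy)

lemma add_add_eq_zero {x y z : ℝ} (hx : x ∈ depressedCubicRoots p q)
    (hy : y ∈ depressedCubicRoots p q) (hz : z ∈ depressedCubicRoots p q)
    (hxy : x ≠ y) (hxz : x ≠ z) (hyz : y ≠ z) : x + y + z = 0 := by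
  have h : (y - z) * (x + y + z) = 0 := by
    linear_combination sq_add_mul_add_sq_add_eq_zero hx hy hxy -
      sq_add_mul_add_sq_add_eq_zero hx hz hxz
  exact (mul_eq_zero.mp h).resolve_left (sub_ne_zero.mpr hyz)

lemma eq_of_disc_pos (hΔ : 0 < (q / 2) ^ 2 + (p / 3) ^ 3) {x y : ℝ}
    (hx : x ∈ depressedCubicRoots p q) (hy : y ∈ depressedCubicRoots p q) : x = y := by
  by_contra hxy
  have hdisc : 108 * ((q / 2) ^ 2 + (p / 3) ^ 3) = (3 * y ^ 2 + 4 * p) * (3 * y ^ 2 + p) ^ 2 := by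
    linear_combination (27 * (q - y ^ 3 - p * y)) * (mem_iff.mp hy)
  have hneg : 3 * y ^ 2 + 4 * p = -(2 * x + y) ^ 2 := by
    linear_combination 4 * sq_add_mul_add_sq_add_eq_zero hx hy hxy
  nlinarith [sq_nonneg (2 * x + y), sq_nonneg (3 * y ^ 2 + p)]

lemma nonempty (p q : ℝ) : (depressedCubicRoots p q).Nonempty := by
  -- with `M = 1 + |p| + |q|` one has `M^3 ≥ M^2 = M + |p| M + |q| M > |p M + q|`
  have hbound : ∀ q : ℝ, 0 < (1 + |p| + |q|) ^ 3 + p * (1 + |p| + |q|) + q := fun q => by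
    set M := 1 + |p| + |q|
    have hM : 1 ≤ M := by linarith [abs_nonneg p, abs_nonneg q]
    have hM3 : M ^ 2 ≤ M ^ 3 := by nlinarith
    have hpM : -(|p| * M) ≤ p * M := by nlinarith [neg_abs_le p]
    have hqM : |q| ≤ |q| * M := by nlinarith [abs_nonneg q]
    nlinarith [neg_abs_le q]
  have hneg : (-(1 + |p| + |q|)) ^ 3 + p * -(1 + |p| + |q|) + q ≤ 0 := by
    have h := hbound (-q)
    rw [abs_neg] at h
    linarith
  obtain ⟨y, hy⟩ := intermediate_value_univ (-(1 + |p| + |q|)) (1 + |p| + |q|)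
    (by fun_prop : Continuous fun y : ℝ => y ^ 3 + p * y + q) ⟨hneg, (hbound q).le⟩
  exact ⟨y, hy⟩

lemma exists_lt_lt_of_disc_neg (hΔ : (q / 2) ^ 2 + (p / 3) ^ 3 < 0) :
    ∃ r₁ r₂ r₃, r₁ < r₂ ∧ r₂ < r₃ ∧ r₁ ∈ depressedCubicRoots p q ∧
      r₂ ∈ depressedCubicRoots p q ∧ r₃ ∈ depressedCubicRoots p q := by
  have hp : p < 0 := by
    have : (p / 3) ^ 3 < 0 := by nlinarith [sq_nonneg (q / 2)]
    linarith [Odd.pow_neg_iff (by decide : Odd 3) |>.mp this]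
  set m := √(-p / 3)
  have hm : 0 < m := Real.sqrt_pos.mpr (by linarith)
  have hp_eq : p = -3 * m ^ 2 := by rw [Real.sq_sqrt (by linarith)]; ring
  -- with `p = -3 m^2`, `Δ < 0` says `|q| < 2 m^3`, and `f` alternates in sign at `-2m, -m, m, 2m`
  have hq : (q - 2 * m ^ 3) * (q + 2 * m ^ 3) < 0 := by
    rw [hp_eq] at hΔ; linear_combination 4 * hΔ
  have hq' : q - 2 * m ^ 3 < 0 ∧ 0 < q + 2 * m ^ 3 := by
    constructor <;> nlinarith [pow_pos hm 3]
  set f : ℝ → ℝ := fun y => y ^ 3 + p * y + q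
  have hf : ∀ u v, ContinuousOn f (Icc u v) := fun u v => by fun_prop
  have hf₁ : f (-(2 * m)) = q - 2 * m ^ 3 := by simp only [f, hp_eq]; ring
  have hf₂ : f (-m) = q + 2 * m ^ 3 := by simp only [f, hp_eq]; ring
  have hf₃ : f m = q - 2 * m ^ 3 := by simp only [f, hp_eq]; ring
  have hf₄ : f (2 * m) = q + 2 * m ^ 3 := by simp only [f, hp_eq]; ring
  obtain ⟨r₁, ⟨-, hr₁⟩, h₁⟩ := intermediate_value_Ioo (by linarith) (hf (-(2 * m)) (-m))
    (show (0 : ℝ) ∈ Ioo (f (-(2 * m))) (f (-m)) by rw [hf₁, hf₂]; exact hq')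
  obtain ⟨r₂, ⟨hr₂, hr₂'⟩, h₂⟩ := intermediate_value_Ioo' (by linarith) (hf (-m) m)
    (show (0 : ℝ) ∈ Ioo (f m) (f (-m)) by rw [hf₂, hf₃]; exact hq')
  obtain ⟨r₃, ⟨hr₃, -⟩, h₃⟩ := intermediate_value_Ioo (by linarith) (hf m (2 * m))
    (show (0 : ℝ) ∈ Ioo (f m) (f (2 * m)) by rw [hf₃, hf₄]; exact hq')
  exact ⟨r₁, r₂, r₃, by linarith, by linarith, h₁, h₂, h₃⟩

lemma ncard_of_disc_neg (hΔ : (q / 2) ^ 2 + (p / 3) ^ 3 < 0) :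
    (depressedCubicRoots p q).ncard = 3 := by
  obtain ⟨r₁, r₂, r₃, h₁₂, h₂₃, h₁, h₂, h₃⟩ := exists_lt_lt_of_disc_neg hΔ
  have h₁₃ := h₁₂.trans h₂₃
  refine ncard_eq_three.mpr ⟨r₁, r₂, r₃, h₁₂.ne, h₁₃.ne, h₂₃.ne, ?_⟩
  ext y
  simp only [mem_insert_iff, mem_singleton_iff]
  refine ⟨fun hy => ?_, by rintro (rfl | rfl | rfl) <;> assumption⟩
  by_cases hy₂ : y = r₂
  · exact Or.inr (Or.inl hy₂)
  by_cases hy₃ : y = r₃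
  · exact Or.inr (Or.inr hy₃)
  have := add_add_eq_zero hy h₂ h₃ hy₂ hy₃ h₂₃.ne
  have := add_add_eq_zero h₁ h₂ h₃ h₁₂.ne h₁₃.ne h₂₃.ne
  exact Or.inl (by linarith)

lemma ncard_of_disc_pos (hΔ : 0 < (q / 2) ^ 2 + (p / 3) ^ 3) :
    (depressedCubicRoots p q).ncard = 1 := by
  obtain ⟨r, hr⟩ := nonempty p q
  exact ncard_eq_one.mpr ⟨r, eq_singleton_iff_unique_mem.mpr ⟨hr, fun _ hy => eq_of_disc_pos hΔ hy hr⟩⟩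

lemma cube_add_mul_add_eq_of_disc_eq_zero (hp : p ≠ 0) (hΔ : (q / 2) ^ 2 + (p / 3) ^ 3 = 0)
    (y : ℝ) : y ^ 3 + p * y + q = (y - 3 * q / p) * (y + 3 * q / (2 * p)) ^ 2 := by
  have hΔ' : 27 * q ^ 2 = -(4 * p ^ 3) := by linear_combination 108 * hΔ
  field_simp
  linear_combination (p * y + q) * hΔ'

lemma ncard_of_disc_eq_zero (hp : p ≠ 0) (hΔ : (q / 2) ^ 2 + (p / 3) ^ 3 = 0) :
    (depressedCubicRoots p q).ncard = 2 := by
  have hq : q ≠ 0 := by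
    rintro rfl
    exact hp (by simpa using hΔ)
  have hroots : depressedCubicRoots p q = {3 * q / p, -(3 * q / (2 * p))} := by
    ext y
    simp [cube_add_mul_add_eq_of_disc_eq_zero hp hΔ, sub_eq_zero, eq_neg_iff_add_eq_zero]
  rw [hroots, ncard_pair]
  intro h
  field_simp at h
  exact hq (by linarith)

lemma zero_zero : depressedCubicRoots 0 0 = {0} := by
  ext y
  simp

end depressedCubicRoots

lemma ncard_insert_zero_image_add {G : Type*} [AddGroup G] {s : Set G} {t : G}
    (hs : s.Finite) (ht : -t ∉ s) : (insert 0 ((· + t) '' s)).ncard = s.ncard + 1 := by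
  rw [ncard_insert_of_notMem _ (hs.image _), ncard_image_of_injective _ (add_left_injective t)]
  rintro ⟨y, hy, hy0⟩
  exact ht (by rwa [← eq_neg_of_add_eq_zero_left hy0])

lemma setOf_mul_depressedCubic_eq_zero {κ t p q : ℝ} (hκ : κ ≠ 0) :
    {x : ℝ | κ * x * ((x - t) ^ 3 + p * (x - t) + q) = 0} =
      insert 0 ((· + t) '' depressedCubicRoots p q) := by
  ext x
  simp [hκ, image_add_right, sub_eq_add_neg]

lemma idempotent_quartic_eq {b c d k : ℝ} (hk : k ≠ 0) (x : ℝ) :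
    k ^ 2 * x ^ 4 - 2 * b * k * x ^ 3 + (b ^ 2 + c * d) * x ^ 2 - c * x =
      k ^ 2 * x * ((x - 2 * b / (3 * k)) ^ 3 + (3 * c * d - b ^ 2) / (3 * k ^ 2) *
        (x - 2 * b / (3 * k)) + (2 * (9 * b * c * d + b ^ 3) / (27 * k ^ 3) - c / k ^ 2)) := by
  field_simp
  ring

theorem stmt_14_general (a b c d : ℝ) (hc : c ≠ 0)
    (hbd : b * d ≠ a * c)
    (p q Δ : ℝ)
    (hp : p = (3 * c * d - b ^ 2) / (3 * (b * d - a * c) ^ 2))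
    (hq : q = 2 * (9 * b * c * d + b ^ 3) / (27 * (b * d - a * c) ^ 3) -
        c / (b * d - a * c) ^ 2)
    (hΔ : Δ = (q / 2) ^ 2 + (p / 3) ^ 3)
    (S : Set ℝ)
    (hS : S = {x : ℝ | (b * d - a * c) ^ 2 * x ^ 4 - 2 * b * (b * d - a * c) * x ^ 3 +
        (b ^ 2 + c * d) * x ^ 2 - c * x = 0}) :
    (0 : ℝ) ∈ S ∧
    (Δ < 0 → S.ncard = 4) ∧
    (0 < Δ → S.ncard = 2) ∧
    (Δ = 0 → p ≠ 0 → q ≠ 0 → S.ncard = 3) ∧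
    (Δ = 0 → p = 0 → q = 0 → S = {0, 2 * b / (3 * (b * d - a * c))}) := by
  set k := b * d - a * c
  set t := 2 * b / (3 * k)
  have hk : k ≠ 0 := sub_ne_zero.mpr hbd
  have hS' : S = insert 0 ((· + t) '' depressedCubicRoots p q) := by
    simp only [hS, idempotent_quartic_eq hk, ← hp, ← hq]
    exact setOf_mul_depressedCubic_eq_zero (pow_ne_zero 2 hk)
  have ht : -t ∉ depressedCubicRoots p q := by
    have : (-t) ^ 3 + p * (-t) + q = -c / k ^ 2 := by
      simp only [hp, hq, t]
      field_simp
      ring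
    rw [depressedCubicRoots.mem_iff, this]
    exact div_ne_zero (neg_ne_zero.mpr hc) (pow_ne_zero 2 hk)
  have hcard := ncard_insert_zero_image_add (depressedCubicRoots.finite p q) ht
  refine ⟨hS' ▸ mem_insert 0 _, fun h => ?_, fun h => ?_, fun h hp0 _ => ?_, fun _ hp0 hq0 => ?_⟩
  · rw [hS', hcard, depressedCubicRoots.ncard_of_disc_neg (hΔ ▸ h)]
  · rw [hS', hcard, depressedCubicRoots.ncard_of_disc_pos (hΔ ▸ h)]
  · rw [hS', hcard, depressedCubicRoots.ncard_of_disc_eq_zero hp0 (hΔ ▸ h)]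
  · rw [hS', hp0, hq0, depressedCubicRoots.zero_zero, image_singleton, zero_add]

/-- Cardano analysis of the quartic equation for idempotents of the
two-dimensional evolution algebra of permutations, when `b*d ≠ a*c`. -/
theorem stmt_14 (a b c d : ℝ) (ha : a ≠ 0) (hb : b ≠ 0) (hc : c ≠ 0) (hd : d ≠ 0)
    (hbd : b * d ≠ a * c)
    (p q Δ : ℝ)
    (hp : p = (3 * c * d - b ^ 2) / (3 * (b * d - a * c) ^ 2))
    (hq : q = 2 * (9 * b * c * d + b ^ 3) / (27 * (b * d - a * c) ^ 3) -
        c / (b * d - a * c) ^ 2)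
    (hΔ : Δ = (q / 2) ^ 2 + (p / 3) ^ 3)
    (S : Set ℝ)
    (hS : S = {x : ℝ | (b * d - a * c) ^ 2 * x ^ 4 - 2 * b * (b * d - a * c) * x ^ 3 +
        (b ^ 2 + c * d) * x ^ 2 - c * x = 0}) :
    (0 : ℝ) ∈ S ∧
    (Δ < 0 → S.ncard = 4) ∧
    (0 < Δ → S.ncard = 2) ∧
    (Δ = 0 → p ≠ 0 → q ≠ 0 → S.ncard = 3) ∧
    (Δ = 0 → p = 0 → q = 0 → S = {0, 2 * b / (3 * (b * d - a * c))}) :=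
  stmt_14_general a b c d hc hbd p q Δ hp hq hΔ S hS
end

section
/- Suppose a i (π i) * a i (τ i) ≠ 0 for all i : Fin n, and suppose S : Fin r → Finset (Fin n) is a family of pairwise disjoint nonempty sets whose union is all of Fin n, such that each S i is invariant under both π and τ (π and τ map S i onto itself) and π and τ restrict to cyclic permutations of each S i. Then the canonical linear equivalence (Fin n → ℝ) ≃ Π i : Fin r, (↥(S i) → ℝ), given by restriction of functions, is an isomorphism of non-unital non-associative ℝ-algebras from E^n_{π,τ} onto the product over i : Fin r of the evolution algebras E_{π_i,τ_i}(a_i) on the finite types ↥(S i), where π_i, τ_i are the permutations of ↥(S i) induced by π, τ, and a_i is the restriction of a to ↥(S i) × ↥(S i). -/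
/-- if `a i (π i) * a i (τ i) ≠ 0` for all `i` and `Fin n` is partitioned
into pairwise disjoint nonempty sets `S i` (`i : Fin r`), each invariant under `π` and
`τ`, on each of which `π` and `τ` restrict to cyclic permutations, then the restriction
map is a linear equivalence `(Fin n → ℝ) ≃ Π i, (↥(S i) → ℝ)` which is an isomorphism of
(non-unital, non-associative) algebras from `E^n_{π,τ}` onto the product of the
evolution algebras `E_{π_i,τ_i}(a_i)` on the `↥(S i)`. -/
theorem stmt_15 (n r : ℕ) (π τ : Equiv.Perm (Fin n)) (a : Fin n → Fin n → ℝ)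
    (ha : ∀ i : Fin n, a i (π i) * a i (τ i) ≠ 0)
    (S : Fin r → Finset (Fin n))
    (hdisj : ∀ i j : Fin r, i ≠ j → Disjoint (S i) (S j))
    (hne : ∀ i : Fin r, (S i).Nonempty)
    (hcover : ∀ k : Fin n, ∃ i : Fin r, k ∈ S i)
    (πi τi : ∀ i : Fin r, Equiv.Perm ↥(S i))
    (hπi : ∀ (i : Fin r) (s : ↥(S i)), (↑(πi i s) : Fin n) = π ↑s)
    (hτi : ∀ (i : Fin r) (s : ↥(S i)), (↑(τi i s) : Fin n) = τ ↑s)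
    (hπcyc : ∀ (i : Fin r) (s t : ↥(S i)), ∃ m : ℕ, (πi i ^ m) s = t)
    (hτcyc : ∀ (i : Fin r) (s t : ↥(S i)), ∃ m : ℕ, (τi i ^ m) s = t) :
    ∃ e : (Fin n → ℝ) ≃ₗ[ℝ] (∀ i : Fin r, (↥(S i) → ℝ)),
      (∀ (x : Fin n → ℝ) (i : Fin r) (s : ↥(S i)), e x i s = x ↑s) ∧
      (∀ (x y : Fin n → ℝ) (i : Fin r),
        e (evolMul π τ a x y) i =
          evolMul (πi i) (τi i) (fun s t : ↥(S i) => a ↑s ↑t) (e x i) (e y i)) := by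
  classical
  have huniq : ∀ (k : Fin n) (i j : Fin r), k ∈ S i → k ∈ S j → i = j := by
    intro k i j hi hj
    by_contra h
    exact Finset.disjoint_left.mp (hdisj i j h) hi hj
  have hπmem : ∀ (i : Fin r) (k : Fin n) (hk : k ∈ S i), π k ∈ S i := by
    intro i k hk
    have := hπi i ⟨k, hk⟩
    rw [← this]
    exact (πi i ⟨k, hk⟩).2
  have hτmem : ∀ (i : Fin r) (k : Fin n) (hk : k ∈ S i), τ k ∈ S i := by
    intro i k hk
    have := hτi i ⟨k, hk⟩
    rw [← this]
    exact (τi i ⟨k, hk⟩).2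
  set G : (∀ i : Fin r, (↥(S i) → ℝ)) → (Fin n → ℝ) :=
    fun f k => f (hcover k).choose ⟨k, (hcover k).choose_spec⟩ with hGdef
  have hG : ∀ (f : ∀ i : Fin r, (↥(S i) → ℝ)) (i : Fin r) (k : Fin n) (hk : k ∈ S i),
      G f k = f i ⟨k, hk⟩ := by
    intro f i k hk
    have h : (hcover k).choose = i := huniq k _ i (hcover k).choose_spec hk
    simp only [hGdef]
    subst h
    rfl
  refine ⟨{ toFun := fun x i s => x ↑s
            invFun := G
            map_add' := fun x y => rfl
            map_smul' := fun c x => rfl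
            left_inv := fun x => rfl
            right_inv := ?_ }, fun x i s => rfl, ?_⟩
  · intro f
    funext i s
    exact hG f i ↑s s.2
  · intro x y i
    funext s
    show (∑ k : Fin n, x k * y k * ((if π k = ↑s then a k (π k) else 0) +
        (if τ k = ↑s then a k (τ k) else 0))) =
      ∑ t : ↥(S i), x ↑t * y ↑t * ((if πi i t = s then a ↑t ↑(πi i t) else 0) +
        (if τi i t = s then a ↑t ↑(τi i t) else 0))
    have key : ∀ t : ↥(S i),
        x ↑t * y ↑t * ((if πi i t = s then a ↑t ↑(πi i t) else 0) +
          (if τi i t = s then a ↑t ↑(τi i t) else 0)) =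
        x ↑t * y ↑t * ((if π ↑t = ↑s then a ↑t (π ↑t) else 0) +
          (if τ ↑t = ↑s then a ↑t (τ ↑t) else 0)) := by
      intro t
      congr 1
      congr 1
      · rw [← hπi i t]
        by_cases h : πi i t = s
        · rw [if_pos h, if_pos (by rw [h])]
        · rw [if_neg h, if_neg (fun hc => h (Subtype.ext hc))]
      · rw [← hτi i t]
        by_cases h : τi i t = s
        · rw [if_pos h, if_pos (by rw [h])]
        · rw [if_neg h, if_neg (fun hc => h (Subtype.ext hc))]
    rw [show (∑ t : ↥(S i), x ↑t * y ↑t * ((if πi i t = s then a ↑t ↑(πi i t) else 0) +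
          (if τi i t = s then a ↑t ↑(τi i t) else 0))) =
        ∑ t : ↥(S i), x ↑t * y ↑t * ((if π ↑t = ↑s then a ↑t (π ↑t) else 0) +
          (if τ ↑t = ↑s then a ↑t (τ ↑t) else 0)) from Finset.sum_congr rfl fun t _ => key t]
    rw [Finset.sum_coe_sort (S i) (fun k => x k * y k *
      ((if π k = ↑s then a k (π k) else 0) + (if τ k = ↑s then a k (τ k) else 0)))]
    symm
    apply Finset.sum_subset (Finset.subset_univ _)
    intro k _ hk
    have hπ0 : (if π k = ↑s then a k (π k) else 0) = 0 := by
      by_cases h : π k = ↑s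
      · exfalso
        obtain ⟨j, hj⟩ := hcover k
        have : (↑s : Fin n) ∈ S j := h ▸ hπmem j k hj
        exact hk ((huniq ↑s j i this s.2) ▸ hj)
      · rw [if_neg h]
    have hτ0 : (if τ k = ↑s then a k (τ k) else 0) = 0 := by
      by_cases h : τ k = ↑s
      · exfalso
        obtain ⟨j, hj⟩ := hcover k
        have : (↑s : Fin n) ∈ S j := h ▸ hτmem j k hj
        exact hk ((huniq ↑s j i this s.2) ▸ hj)
      · rw [if_neg h]
    rw [hπ0, hτ0]
    ring
end

section
/- Let π be a permutation of Fin n which is an n-cycle (i.e., the map k ↦ π^k 0, for k = 0, …, n−1, is a bijection of Fin n), let τ₀ = id be the identity permutation, and suppose a i (π i) * a i i ≠ 0 for all i : Fin n. Let π* be the cyclic shift permutation of Fin n given by π* i = i + 1 (addition in Fin n), and define a' : Fin n → Fin n → ℝ by a' i (i + 1) = a (π^i 0) (π^(i+1) 0) and a' i i = a (π^i 0) (π^i 0) (and a' arbitrary, say 0, elsewhere). Then the linear equivalence of Fin n → ℝ sending the standard basis vector e_i to e_{π^i 0} is an isomorphism of non-unital non-associative ℝ-algebras from E^n_{π*,τ₀}(a')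 onto E^n_{π,τ₀}(a); in particular E^n_{π,τ₀}(a) is isomorphic to the evolution algebra with multiplication table e'_i * e'_i = a (π^i 0) (π^(i+1) 0) • e'_{i+1} + a (π^i 0) (π^i 0) • e'_i, e'_i * e'_j = 0 for i ≠ j. -/
open Function Equiv

theorem le_minimalPeriod_of_injective_pow_apply {α : Type*} [Finite α] (f : Perm α) {x : α}
    {m : ℕ} (hf : Injective fun k : Fin m => (f ^ (k : ℕ)) x) : m ≤ minimalPeriod f x := by
  by_contra! hlt
  have hpos : 0 < minimalPeriod f x :=
    minimalPeriod_pos_of_mem_periodicPts (f.injective.mem_periodicPts x)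
  have hback : (f ^ minimalPeriod f x) x = (f ^ 0) x := by
    rw [Perm.coe_pow, iterate_minimalPeriod, pow_zero, Perm.one_apply]
  exact hpos.ne' (Fin.mk.inj_iff.mp (@hf ⟨_, hlt⟩ ⟨0, hpos.trans hlt⟩ hback))

theorem minimalPeriod_eq_of_injective_pow_apply {n : ℕ} (π : Perm (Fin n)) {x : Fin n}
    (hπ : Injective fun k : Fin n => (π ^ (k : ℕ)) x) : minimalPeriod π x = n :=
  le_antisymm (minimalPeriod_le_card.trans_eq (Fintype.card_fin n))
    (le_minimalPeriod_of_injective_pow_apply π hπ)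

theorem pow_val_add_one_apply {α : Type*} {n : ℕ} [NeZero n] {π : Perm α} {x : α}
    (hper : minimalPeriod π x = n) (i : Fin n) :
    (π ^ ((i + 1 : Fin n) : ℕ)) x = π ((π ^ (i : ℕ)) x) := by
  have hmod := iterate_mod_minimalPeriod_eq (f := π) (x := x) (n := i + 1)
  rw [hper] at hmod
  rw [Fin.val_add, Fin.val_one', Nat.add_mod_mod, Perm.coe_pow, Perm.coe_pow, hmod,
    iterate_succ_apply']

theorem evolMul_comp_symm {ι κ : Type*} [Fintype ι] [DecidableEq ι] [Fintype κ] [DecidableEq κ]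
    (σ : ι ≃ κ) {π' τ' : Perm ι} {a' : ι → ι → ℝ} {π τ : Perm κ} {a : κ → κ → ℝ}
    (hπ : ∀ i, π (σ i) = σ (π' i)) (hτ : ∀ i, τ (σ i) = σ (τ' i))
    (haπ : ∀ i, a' i (π' i) = a (σ i) (π (σ i))) (haτ : ∀ i, a' i (τ' i) = a (σ i) (τ (σ i)))
    (x y : ι → ℝ) :
    evolMul π' τ' a' x y ∘ σ.symm = evolMul π τ a (x ∘ σ.symm) (y ∘ σ.symm) := by
  funext j
  refine Fintype.sum_equiv σ _ _ fun i => ?_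
  simp [haπ, haτ, hπ, hτ, Equiv.eq_symm_apply]

theorem stmt_16_general (n : ℕ) [NeZero n] (π : Equiv.Perm (Fin n))
    (hπ : Function.Bijective (fun k : Fin n => (π ^ (k : ℕ)) 0))
    (a : Fin n → Fin n → ℝ)
    (πs : Equiv.Perm (Fin n)) (hπs : ∀ i : Fin n, πs i = i + 1)
    (a' : Fin n → Fin n → ℝ)
    (ha'1 : ∀ i : Fin n, a' i (i + 1) = a ((π ^ (i : ℕ)) 0) ((π ^ ((i : ℕ) + 1)) 0))
    (ha'2 : ∀ i : Fin n, a' i i = a ((π ^ (i : ℕ)) 0) ((π ^ (i : ℕ)) 0)) :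
    ∃ e : (Fin n → ℝ) ≃ₗ[ℝ] (Fin n → ℝ),
      (∀ i : Fin n, e (Pi.single i 1) = Pi.single ((π ^ (i : ℕ)) 0) (1 : ℝ)) ∧
      (∀ x y : Fin n → ℝ, e (evolMul πs 1 a' x y) = evolMul π 1 a (e x) (e y)) := by
  set σ : Fin n ≃ Fin n := Equiv.ofBijective _ hπ
  have hper : minimalPeriod π 0 = n := minimalPeriod_eq_of_injective_pow_apply π hπ.injective
  have hshift (i : Fin n) : π (σ i) = σ (πs i) := by
    simp only [σ, Equiv.ofBijective_apply, hπs, pow_val_add_one_apply hper]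
  have haπ (i : Fin n) : a' i (πs i) = a (σ i) (π (σ i)) := by
    rw [hπs, ha'1, pow_succ', Perm.mul_apply]
    rfl
  exact ⟨LinearEquiv.funCongrLeft ℝ ℝ σ.symm, fun i => Pi.single_comp_equiv σ.symm i 1,
    evolMul_comp_symm (τ' := 1) (τ := 1) σ hshift (fun _ => rfl) haπ ha'2⟩

/-- for an `n`-cycle `π`, identity `τ₀` and structural constants with
`a i (π i) * a i i ≠ 0`, the evolution algebra `E^n_{π,τ₀}(a)` is isomorphic, via the
linear equivalence sending `e_i` to `e_{π^i 0}`, to `E^n_{π*,τ₀}(a')` where `π*` is the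
cyclic shift `i ↦ i + 1` and `a' i (i+1) = a (π^i 0) (π^(i+1) 0)`,
`a' i i = a (π^i 0) (π^i 0)`. -/
theorem stmt_16 (n : ℕ) [NeZero n] (π : Equiv.Perm (Fin n))
    (hπ : Function.Bijective (fun k : Fin n => (π ^ (k : ℕ)) 0))
    (a : Fin n → Fin n → ℝ)
    (ha : ∀ i : Fin n, a i (π i) * a i i ≠ 0)
    (πs : Equiv.Perm (Fin n)) (hπs : ∀ i : Fin n, πs i = i + 1)
    (a' : Fin n → Fin n → ℝ)
    (ha'1 : ∀ i : Fin n, a' i (i + 1) = a ((π ^ (i : ℕ)) 0) ((π ^ ((i : ℕ) + 1)) 0))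
    (ha'2 : ∀ i : Fin n, a' i i = a ((π ^ (i : ℕ)) 0) ((π ^ (i : ℕ)) 0)) :
    ∃ e : (Fin n → ℝ) ≃ₗ[ℝ] (Fin n → ℝ),
      (∀ i : Fin n, e (Pi.single i 1) = Pi.single ((π ^ (i : ℕ)) 0) (1 : ℝ)) ∧
      (∀ x y : Fin n → ℝ, e (evolMul πs 1 a' x y) = evolMul π 1 a (e x) (e y)) :=
  stmt_16_general n π hπ a πs hπs a' ha'1 ha'2
end

section
/- Let π be a permutation of Fin n which is an n-cycle (i.e., the map k ↦ π^k 0, for k = 0, …, n−1, is a bijection of Fin n), let τ₀ = id be the identity permutation, and suppose a i (π i) * a i i ≠ 0 for all i : Fin n and (a (π^k 0) (π^k 0))^2 = a (π^k 0) (π^(k+1) 0) * a (π^(k+1) 0) (π^(k+1) 0) for all k (indices of the powers of π taken modulo n). Then E^n_{π,τ₀}(a) is isomorphic, as a non-unital non-associative ℝ-algebra, to the evolution algebra A^n = E^n_{π*,τ₀}(𝟙), where π* is the cyclic shift i ↦ i + 1 of Fin n and 𝟙 is the matrix all of whose entries equal 1; A^n has multiplication table η_i * η_i = η_{i+1} +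 η_i (indices modulo n) and η_i * η_j = 0 for i ≠ j. -/
/-
Put `σ k = π^k 0` and `c_k = a (σ k) (σ k) ≠ 0`, and send `x` to `k ↦ c_k x (σ k)`, so that
`e_{σ k} ↦ c_k η_k`. Since `π ∘ σ = σ ∘ (· + 1)`, the image of `e_{σ k}²` is
`c_{k+1} a_{σ k, σ (k+1)} η_{k+1} + c_k² η_k`, while `(c_k η_k)² = c_k² η_{k+1} + c_k² η_k`;
the `η_{k+1}`-coefficients agree by the hypothesis on `a`.
-/

open Function

namespace Equiv.Perm

variable {α : Type*} {n : ℕ}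

theorem isPeriodicPt_of_bijective_pow_apply [NeZero n] {π : Perm α} {x : α}
    (hπ : Bijective fun k : Fin n => (π ^ (k : ℕ)) x) : IsPeriodicPt π n x := by
  obtain ⟨j, hj⟩ := hπ.2 ((π ^ n) x)
  simp only at hj
  rw [IsPeriodicPt, IsFixedPt, ← coe_pow, ← hj]
  suffices hj0 : (j : ℕ) = 0 by rw [hj0, pow_zero, one_apply]
  by_contra hj0
  have hfix : (π ^ (n - j)) x = x := by
    apply (π ^ (j : ℕ)).injective
    rw [← mul_apply, ← pow_add, Nat.add_sub_cancel' j.isLt.le, hj]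
  have hnj := congrArg Fin.val (@hπ.1 ⟨n - j, by omega⟩ 0 (by simpa using hfix))
  simp only [Fin.val_zero] at hnj
  omega

theorem pow_succ_apply_eq_pow_fin_succ_apply [NeZero n] {π : Perm α} {x : α}
    (hπ : Bijective fun k : Fin n => (π ^ (k : ℕ)) x) (k : Fin n) :
    (π ^ ((k : ℕ) + 1)) x = (π ^ ((k + 1 : Fin n) : ℕ)) x := by
  have hk : ((k + 1 : Fin n) : ℕ) = ((k : ℕ) + 1) % n := by
    rw [Fin.val_add, Fin.val_one', Nat.add_mod_mod]
  simp only [hk, coe_pow, (isPeriodicPt_of_bijective_pow_apply hπ).iterate_mod_apply]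

end Equiv.Perm

section EvolutionAlgebra

variable {ι κ : Type*}

noncomputable def scaledReindex (σ : κ ≃ ι) (c : κ → ℝ) (hc : ∀ k, c k ≠ 0) :
    (ι → ℝ) ≃ₗ[ℝ] (κ → ℝ) :=
  (LinearEquiv.funCongrLeft ℝ ℝ σ).trans
    (LinearEquiv.piCongrRight fun k => LinearEquiv.smulOfNeZero ℝ ℝ (c k) (hc k))

@[simp]
theorem scaledReindex_apply (σ : κ ≃ ι) (c : κ → ℝ) (hc : ∀ k, c k ≠ 0) (x : ι → ℝ) (k : κ) :
    scaledReindex σ c hc x k = c k * x (σ k) :=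
  rfl

variable [Fintype ι] [DecidableEq ι]

theorem evolMul_one_apply (π : Equiv.Perm ι) (a : ι → ι → ℝ) (x y : ι → ℝ) (j : ι) :
    evolMul π 1 a x y j =
      x (π.symm j) * y (π.symm j) * a (π.symm j) j + x j * y j * a j j := by
  simp only [evolMul, mul_add, Finset.sum_add_distrib]
  rw [Fintype.sum_eq_single (π.symm j) fun i hi => ?_, Fintype.sum_eq_single j fun i hi => ?_]
  · simp
  · simp [hi]
  · simp [← Equiv.eq_symm_apply, hi]

variable [Fintype κ] [DecidableEq κ]

theorem scaledReindex_evolMul {σ : κ ≃ ι} {π : Equiv.Perm ι} {ρ : Equiv.Perm κ}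
    (hσ : ∀ k, π (σ k) = σ (ρ k)) {a : ι → ι → ℝ} {b : κ → κ → ℝ} {c : κ → ℝ}
    (hc : ∀ k, c k ≠ 0) (hdiag : ∀ k, a (σ k) (σ k) = c k * b k k)
    (hoff : ∀ k, c (ρ k) * a (σ k) (σ (ρ k)) = c k ^ 2 * b k (ρ k)) (x y : ι → ℝ) :
    scaledReindex σ c hc (evolMul π 1 a x y) =
      evolMul ρ 1 b (scaledReindex σ c hc x) (scaledReindex σ c hc y) := by
  ext k
  have hpred : π.symm (σ k) = σ (ρ.symm k) := by
    rw [Equiv.symm_apply_eq, hσ, Equiv.apply_symm_apply]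
  have hoff' := hoff (ρ.symm k)
  rw [Equiv.apply_symm_apply] at hoff'
  simp only [scaledReindex_apply, evolMul_one_apply, hpred]
  linear_combination x (σ (ρ.symm k)) * y (σ (ρ.symm k)) * hoff'
    + c k * x (σ k) * y (σ k) * hdiag k

end EvolutionAlgebra

/-- for an `n`-cycle `π`, identity `τ₀`, structural constants with
`a i (π i) * a i i ≠ 0` and `(a (π^k 0) (π^k 0))^2 = a (π^k 0) (π^(k+1) 0) * a (π^(k+1) 0) (π^(k+1) 0)`
for all `k`, the evolution algebra `E^n_{π,τ₀}(a)` is isomorphic to the evolution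
algebra `A^n = E^n_{π*,τ₀}(𝟙)` with all structural constants equal to `1`, where `π*`
is the cyclic shift `i ↦ i + 1`. -/
theorem stmt_17 (n : ℕ) [NeZero n] (π : Equiv.Perm (Fin n))
    (hπ : Function.Bijective (fun k : Fin n => (π ^ (k : ℕ)) 0))
    (a : Fin n → Fin n → ℝ)
    (ha : ∀ i : Fin n, a i (π i) * a i i ≠ 0)
    (ha2 : ∀ k : Fin n,
      (a ((π ^ (k : ℕ)) 0) ((π ^ (k : ℕ)) 0)) ^ 2 =
        a ((π ^ (k : ℕ)) 0) ((π ^ ((k : ℕ) + 1)) 0) *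
          a ((π ^ ((k : ℕ) + 1)) 0) ((π ^ ((k : ℕ) + 1)) 0))
    (πs : Equiv.Perm (Fin n)) (hπs : ∀ i : Fin n, πs i = i + 1) :
    ∃ e : (Fin n → ℝ) ≃ₗ[ℝ] (Fin n → ℝ),
      ∀ x y : Fin n → ℝ,
        e (evolMul π 1 a x y) = evolMul πs 1 (fun _ _ => (1 : ℝ)) (e x) (e y) := by
  set σ := Equiv.ofBijective _ hπ
  have hsucc : ∀ k : Fin n, (π ^ ((k : ℕ) + 1)) 0 = σ (πs k) := fun k => by
    rw [hπs, Equiv.Perm.pow_succ_apply_eq_pow_fin_succ_apply hπ]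
    rfl
  have hσ : ∀ k, π (σ k) = σ (πs k) := fun k => by
    rw [← hsucc, pow_succ', Equiv.Perm.mul_apply]
    rfl
  have hc : ∀ k, a (σ k) (σ k) ≠ 0 := fun k => right_ne_zero_of_mul (ha (σ k))
  refine ⟨scaledReindex σ (fun k => a (σ k) (σ k)) hc,
    scaledReindex_evolMul hσ hc (fun k => (mul_one _).symm) fun k => ?_⟩
  have h := ha2 k
  rw [hsucc] at h
  change a (σ k) (σ k) ^ 2 = a (σ k) (σ (πs k)) * _ at h
  linear_combination -h
end

section
/- Let π and τ be permutations of Fin n such that π is an n-cycle (i.e., the map k ↦ π^k 0, for k = 0, …, n−1, is a bijection of Fin n) and τ ∘ π = id (so τ = π⁻¹), and suppose a i (π i) * a i (τ i) ≠ 0 for all i : Fin n. Let π* be the cyclic shift of Fin n given by π* i = i + 1 and τ* = (π*)⁻¹ the shift i ↦ i − 1, and define a' : Fin n → Fin n → ℝ by a' i (i + 1) = a (π^i 0) (π^(i+1) 0) and a' i (i − 1) = a (π^i 0) (π^(i−1) 0) (and a' arbitrary, say 0, elsewhere). Then the linear equivalence of Fin n → ℝ sending the standard basis vector e_i to e_{π^i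 0} is an isomorphism of non-unital non-associative ℝ-algebras from E^n_{π*,τ*}(a') onto E^n_{π,τ}(a); in particular E^n_{π,τ}(a) is isomorphic to the evolution algebra with multiplication table e'_i * e'_i = a (π^i 0) (π^(i+1) 0) • e'_{i+1} + a (π^i 0) (π^(i−1) 0) • e'_{i−1} (indices modulo n), e'_i * e'_j = 0 for i ≠ j. -/
/-- for an `n`-cycle `π` with `τ ∘ π = id` (so `τ = π⁻¹`) and
`a i (π i) * a i (τ i) ≠ 0` for all `i`, the evolution algebra `E^n_{π,τ}(a)` is
isomorphic, via the linear equivalence sending `e_i` to `e_{π^i 0}`, to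
`E^n_{π*,τ*}(a')` where `π* : i ↦ i + 1`, `τ* = (π*)⁻¹ : i ↦ i − 1`, and
`a' i (i+1) = a (π^i 0) (π^(i+1) 0)`, `a' i (i−1) = a (π^i 0) (π^(i−1) 0)` (indices
modulo `n`). -/
theorem stmt_19 (n : ℕ) [NeZero n] (π τ : Equiv.Perm (Fin n))
    (hπ : Function.Bijective (fun k : Fin n => (π ^ (k : ℕ)) 0))
    (hτπ : ∀ k : Fin n, τ (π k) = k)
    (a : Fin n → Fin n → ℝ)
    (ha : ∀ i : Fin n, a i (π i) * a i (τ i) ≠ 0)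
    (πs τs : Equiv.Perm (Fin n))
    (hπs : ∀ i : Fin n, πs i = i + 1) (hτs : ∀ i : Fin n, τs i = i - 1)
    (a' : Fin n → Fin n → ℝ)
    (ha'1 : ∀ i : Fin n,
      a' i (i + 1) = a ((π ^ (i : ℕ)) 0) ((π ^ (((i + 1 : Fin n) : ℕ))) 0))
    (ha'2 : ∀ i : Fin n,
      a' i (i - 1) = a ((π ^ (i : ℕ)) 0) ((π ^ (((i - 1 : Fin n) : ℕ))) 0)) :
    ∃ e : (Fin n → ℝ) ≃ₗ[ℝ] (Fin n → ℝ),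
      (∀ i : Fin n, e (Pi.single i 1) = Pi.single ((π ^ (i : ℕ)) 0) (1 : ℝ)) ∧
      (∀ x y : Fin n → ℝ, e (evolMul πs τs a' x y) = evolMul π τ a (e x) (e y)) := by
  have hn := NeZero.pos n
  set f : Fin n ≃ Fin n := Equiv.ofBijective _ hπ with hf
  have hfk : ∀ k : Fin n, f k = (π ^ (k : ℕ)) 0 := fun k => rfl
  -- π^n 0 = 0
  have hn0 : (π ^ n) 0 = 0 := by
    obtain ⟨m, hm⟩ := hπ.2 ((π ^ n) 0)
    simp only at hm
    by_cases hm0 : (m : ℕ) = 0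
    · rw [← hm, hm0]; simp
    · exfalso
      have hle : (m : ℕ) ≤ n := le_of_lt m.isLt
      have hsplit : π ^ n = π ^ (m : ℕ) * π ^ (n - (m : ℕ)) := by
        rw [← pow_add, Nat.add_sub_cancel' hle]
      have h1 : (π ^ (n - (m : ℕ))) 0 = 0 := by
        apply (π ^ (m : ℕ)).injective
        rw [← Equiv.Perm.mul_apply, ← hsplit, ← hm]
      have hlt : n - (m : ℕ) < n := Nat.sub_lt hn (Nat.pos_of_ne_zero hm0)
      have h2 : f ⟨n - (m : ℕ), hlt⟩ = f ⟨0, hn⟩ := by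
        rw [hfk, hfk]; simpa using h1
      have := f.injective h2
      have h3 : n - (m : ℕ) = 0 := by simpa using congrArg Fin.val this
      omega
  have hstep : ∀ k : Fin n, π (f k) = f (k + 1) := by
    intro k
    rw [hfk, hfk, ← Equiv.Perm.mul_apply, ← pow_succ']
    have hval : ((k + 1 : Fin n) : ℕ) = ((k : ℕ) + 1) % n := by
      rw [Fin.add_def, Fin.val_one']
      conv_rhs => rw [Nat.add_mod, Nat.mod_eq_of_lt k.isLt]
    rcases Nat.lt_or_ge ((k : ℕ) + 1) n with h | h
    · rw [hval, Nat.mod_eq_of_lt h]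
    · have hkn : (k : ℕ) + 1 = n := by omega
      have h0 : ((k + 1 : Fin n) : ℕ) = 0 := by rw [hval, hkn, Nat.mod_self]
      rw [hkn, h0, pow_zero]
      simpa using hn0
  have htau : ∀ k : Fin n, τ (f k) = f (k - 1) := by
    intro k
    have := hstep (k - 1)
    rw [sub_add_cancel] at this
    rw [← this, hτπ]
  refine ⟨LinearEquiv.funCongrLeft ℝ ℝ f.symm, ?_, ?_⟩
  · intro i
    funext j
    simp only [LinearEquiv.funCongrLeft_apply, LinearMap.funLeft_apply]
    rw [Pi.single_apply, Pi.single_apply, ← hfk]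
    by_cases h : f i = j
    · rw [if_pos (by rw [← h]; simp), if_pos h.symm]
    · rw [if_neg (fun hh => h (by rw [← hh]; simp)), if_neg (Ne.symm h)]
  · intro x y
    funext j
    simp only [LinearEquiv.funCongrLeft_apply, LinearMap.funLeft_apply]
    unfold evolMul
    refine Fintype.sum_equiv f _ _ fun k => ?_
    simp only [LinearMap.funLeft_apply, Equiv.symm_apply_apply]
    congr 1
    rw [hπs k, hτs k, ha'1 k, ha'2 k, hstep k, htau k]
    simp only [Equiv.eq_symm_apply, hfk]
end
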